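/- arXiv:2106.04116 — 8 statements merged into one kernel-verified Lean document; each statement's English description precedes it below -/
import Mathlib

section
/- Let X ⊆ ℝⁿ ∖ {0} be a cone (i.e. t·x ∈ X whenever x ∈ X and t > 0) which is topologically regular, i.e. X is contained in the closure of the interior of X, and let H : X → ℝ be continuous and zero-homogeneous (H(t·x) = H(x) for all t > 0 and x ∈ X). Then the infimum of H over X equals the infimum of H over the integer points X ∩ ℤⁿ, and the supremum of H over X equals the supremum of H over X ∩ ℤⁿ (infima and suprema taken in the extended reals). -/
private lemma ereal_le_coe_of_forall {a : EReal} {r : ℝ}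
    (h : ∀ ε : ℝ, 0 < ε → a ≤ ((r + ε : ℝ) : EReal)) : a ≤ (r : EReal) := by
  by_contra hc
  push_neg at hc
  obtain ⟨c, hc1, hc2⟩ := EReal.lt_iff_exists_real_btwn.mp hc
  have hrc : r < c := EReal.coe_lt_coe_iff.mp hc1
  have := h (c - r) (by linarith)
  rw [show r + (c - r) = c by ring] at this
  exact absurd (this.trans_lt hc2) (lt_irrefl a)

private lemma ereal_coe_le_of_forall {a : EReal} {r : ℝ}
    (h : ∀ ε : ℝ, 0 < ε → ((r - ε : ℝ) : EReal) ≤ a) : (r : EReal) ≤ a := by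
  by_contra hc
  push_neg at hc
  obtain ⟨c, hc1, hc2⟩ := EReal.lt_iff_exists_real_btwn.mp hc
  have hrc : c < r := EReal.coe_lt_coe_iff.mp hc2
  have := h (r - c) (by linarith)
  rw [show r - (r - c) = c by ring] at this
  exact absurd (hc1.trans_le this) (lt_irrefl a)

private lemma approx {n : ℕ} (X : Set (Fin n → ℝ)) (H : (Fin n → ℝ) → ℝ)
    (hcone : ∀ x ∈ X, ∀ t : ℝ, 0 < t → t • x ∈ X)
    (hreg : X ⊆ closure (interior X))
    (hH : ContinuousOn H X)
    (hhom : ∀ x ∈ X, ∀ t : ℝ, 0 < t → H (t • x) = H x) :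
    ∀ x ∈ X, ∀ ε : ℝ, 0 < ε →
      ∃ z ∈ X ∩ {x | ∀ i, ∃ k : ℤ, x i = (k : ℝ)}, |H z - H x| < ε := by
  intro x hx ε hε
  obtain ⟨δ, hδ, hδs⟩ := Metric.continuousWithinAt_iff.mp (hH x hx) ε hε
  obtain ⟨y, hy, hxy⟩ := Metric.mem_closure_iff.mp (hreg hx) (δ / 2) (half_pos hδ)
  obtain ⟨r, hr, hrs⟩ := Metric.mem_nhds_iff.mp (mem_interior_iff_mem_nhds.mp hy)
  set r' := min r (δ / 2) with hr'def
  have hr' : 0 < r' := lt_min hr (half_pos hδ)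
  set t : ℝ := 2 / r' with htdef
  have ht : 0 < t := by positivity
  set z : Fin n → ℝ := fun i => (round (t * y i) : ℝ) with hzdef
  have hdz : dist z (t • y) ≤ 1 / 2 := by
    refine dist_pi_le_iff (by norm_num) |>.mpr fun i => ?_
    show dist ((round (t * y i) : ℝ)) ((t • y) i) ≤ 1 / 2
    simp only [Pi.smul_apply, smul_eq_mul, Real.dist_eq]
    rw [abs_sub_comm]
    exact abs_sub_round (t * y i)
  set w : Fin n → ℝ := t⁻¹ • z with hwdef
  have hwy : dist w y < r' := by
    have key2 : dist (t⁻¹ • z) (t⁻¹ • (t • y)) = ‖t⁻¹‖ * dist z (t • y) :=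
      dist_smul₀ _ _ _
    rw [inv_smul_smul₀ ht.ne'] at key2
    rw [hwdef, key2]
    have h1 : ‖t⁻¹‖ = r' / 2 := by
      rw [Real.norm_eq_abs, abs_of_pos (by positivity), htdef]
      field_simp
    calc ‖t⁻¹‖ * dist z (t • y) ≤ (r' / 2) * (1 / 2) := by
          rw [h1]; exact mul_le_mul_of_nonneg_left hdz (by positivity)
      _ < r' := by linarith
  have hwX : w ∈ X :=
    hrs (Metric.mem_ball.mpr (hwy.trans_le (min_le_left _ _)))
  have hwx : dist w x < δ := by
    calc dist w x ≤ dist w y + dist y x := dist_triangle _ _ _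
      _ < δ / 2 + δ / 2 := by
          refine add_lt_add (hwy.trans_le (min_le_right _ _)) ?_
          rwa [dist_comm]
      _ = δ := by ring
  have hzw : z = t • w := by rw [hwdef, smul_inv_smul₀ ht.ne']
  refine ⟨z, ⟨hzw ▸ hcone w hwX t ht, fun i => ⟨round (t * y i), rfl⟩⟩, ?_⟩
  have hHz : H z = H w := by rw [hzw, hhom w hwX t ht]
  have := hδs hwX hwx
  rwa [Real.dist_eq, ← hHz] at this

/-- For a topologically regular cone `X ⊆ ℝⁿ ∖ {0}` and a continuous
zero-homogeneous function `H` on `X`, the infimum (resp. supremum) of `H` over `X`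
equals the infimum (resp. supremum) of `H` over the integer points of `X`,
taken in the extended reals. -/
theorem stmt_0 {n : ℕ} (X : Set (Fin n → ℝ)) (H : (Fin n → ℝ) → ℝ)
    (hX0 : ∀ x ∈ X, x ≠ 0)
    (hcone : ∀ x ∈ X, ∀ t : ℝ, 0 < t → t • x ∈ X)
    (hreg : X ⊆ closure (interior X))
    (hH : ContinuousOn H X)
    (hhom : ∀ x ∈ X, ∀ t : ℝ, 0 < t → H (t • x) = H x) :
    sInf ((fun x => (H x : EReal)) '' X)
        = sInf ((fun x => (H x : EReal)) '' (X ∩ {x | ∀ i, ∃ k : ℤ, x i = (k : ℝ)})) ∧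
    sSup ((fun x => (H x : EReal)) '' X)
        = sSup ((fun x => (H x : EReal)) '' (X ∩ {x | ∀ i, ∃ k : ℤ, x i = (k : ℝ)})) := by
  have key := approx X H hcone hreg hH hhom
  have hsub : ((fun x => (H x : EReal)) '' (X ∩ {x | ∀ i, ∃ k : ℤ, x i = (k : ℝ)})) ⊆
      (fun x => (H x : EReal)) '' X :=
    Set.image_mono Set.inter_subset_left
  constructor
  · refine le_antisymm (sInf_le_sInf hsub) (le_sInf ?_)
    rintro b ⟨x, hx, rfl⟩
    refine ereal_le_coe_of_forall fun ε hε => ?_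
    obtain ⟨z, hz, hzε⟩ := key x hx ε hε
    refine (sInf_le (Set.mem_image_of_mem _ hz)).trans ?_
    rw [EReal.coe_le_coe_iff]
    cases abs_sub_lt_iff.mp hzε with
    | intro h1 h2 => linarith
  · refine le_antisymm (sSup_le ?_) (sSup_le_sSup hsub)
    rintro b ⟨x, hx, rfl⟩
    refine ereal_coe_le_of_forall fun ε hε => ?_
    obtain ⟨z, hz, hzε⟩ := key x hx ε hε
    refine le_trans ?_ (le_sSup (Set.mem_image_of_mem _ hz))
    rw [EReal.coe_le_coe_iff]
    cases abs_sub_lt_iff.mp hzε with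
    | intro h1 h2 => linarith
end

section
/- Let G : ℝⁿ → ℝ be convex, let Π ⊆ ℝⁿ be a linear subspace, and assume that G_Π(x) := inf_{z∈Π} G(x+z) is finite for every x ∈ ℝⁿ. Then: (i) G_Π is convex; (ii) G_Π(x+z) = G_Π(x) for all x ∈ ℝⁿ and z ∈ Π; (iii) ∂G(x) ∩ Π^⊥ ⊆ ∂G_Π(x) for every x; (iv) if x₀ is a minimizer of G restricted to the affine subspace x + Π, then ∂G_Π(x) = ∂G(x₀) ∩ Π^⊥; (v) the set {x ∈ ℝⁿ : ∂G(x) ∩ Π^⊥ ≠ ∅} equals {x ∈ ℝⁿ : G(x) = G_Π(x)}, equals the set of points that minimize G on their own affine translate of Π, and is a closed subset of ℝⁿ. -/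
open scoped RealInnerProductSpace

/-- The subdifferential of a function `Φ : ℝⁿ → ℝ` at `x`. -/
def subdiff {n : ℕ} (Φ : EuclideanSpace ℝ (Fin n) → ℝ) (x : EuclideanSpace ℝ (Fin n)) :
    Set (EuclideanSpace ℝ (Fin n)) :=
  {v | ∀ y, Φ x + ⟪v, y - x⟫ ≤ Φ y}

lemma subdiff_nonempty {n : ℕ} {G : EuclideanSpace ℝ (Fin n) → ℝ}
    (hG : ConvexOn ℝ Set.univ G) (x : EuclideanSpace ℝ (Fin n)) :
    (subdiff G x).Nonempty := by
  have hcont : Continuous G := hG.locallyLipschitz.continuous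
  set S : Set (EuclideanSpace ℝ (Fin n) × ℝ) := {p | G p.1 < p.2} with hS
  have hSopen : IsOpen S := isOpen_lt (hcont.comp continuous_fst) continuous_snd
  have hSconv : Convex ℝ S := by
    intro p hp q hq a b ha hb hab
    simp only [hS, Set.mem_setOf_eq] at *
    have h1 := hG.2 (Set.mem_univ p.1) (Set.mem_univ q.1) ha hb hab
    rcases eq_or_lt_of_le ha with h | h
    · simp only [← h, zero_smul, zero_add] at hab ⊢
      simpa [hab] using hq
    · have h2 : a • G p.1 + b • G q.1 < a • p.2 + b • q.2 := by
        have := mul_le_mul_of_nonneg_left hq.le hb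
        have := mul_lt_mul_of_pos_left hp h
        simp only [smul_eq_mul]; linarith
      calc G (a • p.1 + b • q.1) ≤ a • G p.1 + b • G q.1 := h1
        _ < _ := h2
  have hxS : (x, G x) ∉ S := by simp [hS]
  obtain ⟨f, hf⟩ := geometric_hahn_banach_open_point hSconv hSopen hxS
  set c : ℝ := f (0, 1) with hc
  have hsplit : ∀ y : EuclideanSpace ℝ (Fin n), ∀ t : ℝ, f (y, t) = f (y, 0) + t * c := by
    intro y t
    have : (y, t) = (y, (0:ℝ)) + t • ((0:EuclideanSpace ℝ (Fin n)), (1:ℝ)) := by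
      simp [Prod.ext_iff]
    rw [this, map_add, map_smul]
    simp [hc, mul_comm, smul_eq_mul]
  have hcneg : c < 0 := by
    have h1 := hf (x, G x + 1) (by simp [hS])
    rw [hsplit x (G x + 1), hsplit x (G x)] at h1
    nlinarith
  have hcpos : 0 < -c := by linarith
  have key : ∀ y, f (y, 0) + G y * c ≤ f (x, 0) + G x * c := by
    intro y
    by_contra h
    push_neg at h
    set δ := (f (y,0) + G y * c) - (f (x,0) + G x * c) with hδ
    have hδpos : 0 < δ := by linarith
    have hε : 0 < δ / (-c) := div_pos hδpos hcpos
    have h2 := hf (y, G y + δ / (-c)) (by simp [hS]; linarith)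
    rw [hsplit y _, hsplit x _] at h2
    have h3 : (δ / (-c)) * c = -δ := by
      field_simp
      rw [div_self (ne_of_lt hcneg)]
    nlinarith
  refine ⟨(InnerProductSpace.toDual ℝ _).symm
    ((-c)⁻¹ • (f.comp (ContinuousLinearMap.inl ℝ (EuclideanSpace ℝ (Fin n)) ℝ))), ?_⟩
  intro y
  rw [InnerProductSpace.toDual_symm_apply]
  have h3 : ((-c)⁻¹ • (f.comp (ContinuousLinearMap.inl ℝ (EuclideanSpace ℝ (Fin n)) ℝ))) (y - x)
      = (-c)⁻¹ * (f (y, 0) - f (x, 0)) := by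
    simp [ContinuousLinearMap.smul_apply, ContinuousLinearMap.comp_apply,
      ContinuousLinearMap.inl_apply, map_sub, mul_sub]
  rw [h3]
  have hk : f (y,0) - f (x,0) ≤ (G x - G y) * c := by nlinarith [key y]
  have h5 := mul_le_mul_of_nonneg_left hk (inv_nonneg.2 hcpos.le)
  have h6 : (-c)⁻¹ * c = -1 := by field_simp; rw [div_self (ne_of_lt hcneg)]
  have h7 : (-c)⁻¹ * ((G x - G y) * c) = G y - G x := by
    have hc0 : c ≠ 0 := ne_of_lt hcneg
    field_simp
    ring
  linarith [h5, h7.symm ▸ h5]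

/-- properties of the projection `G_Π(x) = inf_{z ∈ Π} G(x+z)` of a convex
function `G` along a linear subspace `Π`. -/
theorem stmt_2 {n : ℕ} (G : EuclideanSpace ℝ (Fin n) → ℝ)
    (hG : ConvexOn ℝ Set.univ G)
    (P : Submodule ℝ (EuclideanSpace ℝ (Fin n)))
    (GP : EuclideanSpace ℝ (Fin n) → ℝ)
    (hbdd : ∀ x, BddBelow (Set.range fun z : P => G (x + (z : EuclideanSpace ℝ (Fin n)))))
    (hGP : ∀ x, GP x = ⨅ z : P, G (x + (z : EuclideanSpace ℝ (Fin n)))) :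
    ConvexOn ℝ Set.univ GP ∧
    (∀ x, ∀ z ∈ P, GP (x + z) = GP x) ∧
    (∀ x, subdiff G x ∩ (Pᗮ : Set (EuclideanSpace ℝ (Fin n))) ⊆ subdiff GP x) ∧
    (∀ x x₀, x₀ - x ∈ P → (∀ z ∈ P, G x₀ ≤ G (x + z)) →
      subdiff GP x = subdiff G x₀ ∩ (Pᗮ : Set (EuclideanSpace ℝ (Fin n)))) ∧
    ({x | (subdiff G x ∩ (Pᗮ : Set (EuclideanSpace ℝ (Fin n)))).Nonempty}
        = {x | G x = GP x}) ∧
    ({x | (subdiff G x ∩ (Pᗮ : Set (EuclideanSpace ℝ (Fin n)))).Nonempty}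
        = {x | ∀ z ∈ P, G x ≤ G (x + z)}) ∧
    IsClosed {x | (subdiff G x ∩ (Pᗮ : Set (EuclideanSpace ℝ (Fin n)))).Nonempty} := by
  have hcont : Continuous G := hG.locallyLipschitz.continuous
  have hle : ∀ x, ∀ z ∈ P, GP x ≤ G (x + z) := by
    intro x z hz
    rw [hGP]
    exact ciInf_le (hbdd x) ⟨z, hz⟩
  have hGPle : ∀ x, GP x ≤ G x := fun x => by simpa using hle x 0 P.zero_mem
  -- (ii)
  have h1 : ∀ x, ∀ z ∈ P, GP (x + z) ≤ GP x := by
    intro x z hz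
    rw [hGP x]
    refine le_ciInf fun w => ?_
    have he : x + z + ((w : EuclideanSpace ℝ (Fin n)) - z) = x + w := by abel
    calc GP (x + z) ≤ G (x + z + ((w : EuclideanSpace ℝ (Fin n)) - z)) :=
          hle _ _ (P.sub_mem w.2 hz)
      _ = G (x + w) := by rw [he]
  have hinv : ∀ x, ∀ z ∈ P, GP (x + z) = GP x := by
    intro x z hz
    refine le_antisymm (h1 x z hz) ?_
    have := h1 (x + z) (-z) (P.neg_mem hz)
    simpa using this
  -- (i)
  have hconv : ConvexOn ℝ Set.univ GP := by
    refine ⟨convex_univ, ?_⟩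
    intro x _ y _ a b ha hb hab
    rw [hGP x, hGP y, Real.smul_iInf_of_nonneg ha, Real.smul_iInf_of_nonneg hb]
    refine le_ciInf_add_ciInf fun z w => ?_
    have hmem : a • (z : EuclideanSpace ℝ (Fin n)) + b • (w : EuclideanSpace ℝ (Fin n)) ∈ P :=
      P.add_mem (P.smul_mem a z.2) (P.smul_mem b w.2)
    have he : a • x + b • y + (a • (z : EuclideanSpace ℝ (Fin n)) + b • (w : EuclideanSpace ℝ (Fin n)))
        = a • (x + z) + b • (y + w) := by
      rw [smul_add, smul_add]; abel
    calc GP (a • x + b • y)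
        ≤ G (a • x + b • y + (a • (z : EuclideanSpace ℝ (Fin n)) + b • (w : EuclideanSpace ℝ (Fin n)))) :=
          hle _ _ hmem
      _ = G (a • (x + z) + b • (y + w)) := by rw [he]
      _ ≤ a • G (x + z) + b • G (y + w) := hG.2 (Set.mem_univ _) (Set.mem_univ _) ha hb hab
  -- (iii)
  have hsub : ∀ x, subdiff G x ∩ (Pᗮ : Set (EuclideanSpace ℝ (Fin n))) ⊆ subdiff GP x := by
    rintro x v ⟨hv1, hv2⟩
    intro y
    rw [hGP y]
    refine le_ciInf fun w => ?_
    have h0 : ⟪v, (w : EuclideanSpace ℝ (Fin n))⟫ = 0 := by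
      rw [real_inner_comm]
      exact (Submodule.mem_orthogonal P v).1 hv2 w w.2
    have he : y + (w : EuclideanSpace ℝ (Fin n)) - x = (y - x) + w := by abel
    have h2 : ⟪v, y + (w : EuclideanSpace ℝ (Fin n)) - x⟫ = ⟪v, y - x⟫ := by
      rw [he, inner_add_right, h0, add_zero]
    have h3 := hv1 (y + w)
    rw [h2] at h3
    linarith [hGPle x]
  -- orthogonality helper
  have horth : ∀ v ∈ Pᗮ, ∀ u ∈ P, ⟪v, u⟫ = 0 := by
    intro v hv u hu
    rw [real_inner_comm]
    exact (Submodule.mem_orthogonal P v).1 hv u hu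
  -- (iv)
  have hmin : ∀ x x₀, x₀ - x ∈ P → (∀ z ∈ P, G x₀ ≤ G (x + z)) →
      subdiff GP x = subdiff G x₀ ∩ (Pᗮ : Set (EuclideanSpace ℝ (Fin n))) := by
    intro x x₀ hx0 hminz
    have hxx : x + (x₀ - x) = x₀ := by abel
    have hGPx : GP x = G x₀ := by
      refine le_antisymm ?_ ?_
      · have := hle x (x₀ - x) hx0
        rwa [hxx] at this
      · rw [hGP]
        exact le_ciInf fun z => hminz z z.2
    have hGPx0 : GP x₀ = GP x := by
      rw [← hxx]
      exact hinv x _ hx0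
    ext v
    constructor
    · intro hv
      have hvperp : v ∈ Pᗮ := by
        rw [Submodule.mem_orthogonal]
        intro u hu
        have ha1 := hv (x + u)
        have ha2 := hv (x + (-u))
        rw [hinv x u hu] at ha1
        rw [hinv x (-u) (P.neg_mem hu)] at ha2
        have e1 : x + u - x = u := by abel
        have e2 : x + (-u) - x = -u := by abel
        rw [e1] at ha1
        rw [e2, inner_neg_right] at ha2
        rw [real_inner_comm]
        linarith
      refine ⟨?_, hvperp⟩
      intro y
      have hv1 := hv y
      have h3 : ⟪v, x₀ - x⟫ = 0 := horth v hvperp _ hx0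
      have h2 : ⟪v, y - x⟫ = ⟪v, y - x₀⟫ + ⟪v, x₀ - x⟫ := by
        rw [← inner_add_right]
        congr 1
        abel
      rw [h2, h3, add_zero, hGPx] at hv1
      linarith [hGPle y]
    · rintro ⟨hv1, hv2⟩
      have hvx0 : v ∈ subdiff GP x₀ := hsub x₀ ⟨hv1, hv2⟩
      intro y
      have hv3 := hvx0 y
      have h3 : ⟪v, x₀ - x⟫ = 0 := horth v hv2 _ hx0
      have h2 : ⟪v, y - x⟫ = ⟪v, y - x₀⟫ + ⟪v, x₀ - x⟫ := by
        rw [← inner_add_right]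
        congr 1
        abel
      rw [hGPx0] at hv3
      rw [h2, h3, add_zero]
      linarith
  -- (v)
  have hAC : {x | (subdiff G x ∩ (Pᗮ : Set (EuclideanSpace ℝ (Fin n)))).Nonempty}
      = {x | ∀ z ∈ P, G x ≤ G (x + z)} := by
    ext x
    constructor
    · rintro ⟨v, hv1, hv2⟩ z hz
      have h0 : ⟪v, x + z - x⟫ = 0 := by
        have e1 : x + z - x = z := by abel
        rw [e1]
        exact horth v hv2 z hz
      have := hv1 (x + z)
      rw [h0] at this
      linarith
    · intro hx
      have hm := hmin x x (by simp) hx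
      obtain ⟨v, hv⟩ := subdiff_nonempty hconv x
      exact ⟨v, hm ▸ hv⟩
  have hAB : {x | (subdiff G x ∩ (Pᗮ : Set (EuclideanSpace ℝ (Fin n)))).Nonempty}
      = {x | G x = GP x} := by
    rw [hAC]
    ext x
    simp only [Set.mem_setOf_eq]
    constructor
    · intro hx
      refine le_antisymm ?_ (hGPle x)
      rw [hGP]
      exact le_ciInf fun z => hx z z.2
    · intro hx z hz
      calc G x = GP x := hx
        _ ≤ G (x + z) := hle x z hz
  have hclosed : IsClosed {x | (subdiff G x ∩ (Pᗮ : Set (EuclideanSpace ℝ (Fin n)))).Nonempty} := by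
    rw [hAC]
    have he : {x | ∀ z ∈ P, G x ≤ G (x + z)}
        = ⋂ z ∈ (P : Set (EuclideanSpace ℝ (Fin n))), {x | G x ≤ G (x + z)} := by
      ext x; simp
    rw [he]
    exact isClosed_biInter fun z hz =>
      isClosed_le hcont (hcont.comp (continuous_id.add continuous_const))
  exact ⟨hconv, hinv, hsub, hmin, hAB, hAC, hclosed⟩
end

section
/- Let F, G : ℝⁿ → ℝ be convex functions and let Δ ⊆ ℝⁿ be a convex polytope (the convex hull of a finite set). Suppose the restrictions of F and of G to Δ are affine, and suppose (λ, x) is an eigenpair of the pair (F, G), i.e. ∂F(x) ∩ λ·∂G(x) ≠ ∅, where x lies in the intrinsic (relative) interior of Δ. Then for every extreme point v of Δ, ∂F(v) ∩ λ·∂G(v) ≠ ∅, i.e. (λ, v) is also an eigenpair of (F, G). -/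
open scoped RealInnerProductSpace

/-- Moving slightly past an intrinsic-interior point away from any point of the set
stays in the set. -/
lemma exists_pos_extend {n : ℕ} {Δ : Set (EuclideanSpace ℝ (Fin n))}
    {x v : EuclideanSpace ℝ (Fin n)} (hx : x ∈ intrinsicInterior ℝ Δ) (hv : v ∈ Δ) :
    ∃ t : ℝ, 0 < t ∧ x + t • (x - v) ∈ Δ := by
  have hxΔ : x ∈ Δ := intrinsicInterior_subset hx
  rw [mem_intrinsicInterior] at hx
  obtain ⟨y, hy, hyx⟩ := hx
  have hxs : x ∈ affineSpan ℝ Δ := subset_affineSpan ℝ Δ hxΔ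
  have hvs : v ∈ affineSpan ℝ Δ := subset_affineSpan ℝ Δ hv
  have hmem : ∀ t : ℝ, x + t • (x - v) ∈ affineSpan ℝ Δ := by
    intro t
    have hd : x - v ∈ (affineSpan ℝ Δ).direction := by
      simpa using AffineSubspace.vsub_mem_direction hxs hvs
    have := AffineSubspace.vadd_mem_of_mem_direction
      (Submodule.smul_mem _ t hd) hxs
    simpa [add_comm] using this
  set g : ℝ → affineSpan ℝ Δ := fun t => ⟨x + t • (x - v), hmem t⟩ with hg
  have hgc : Continuous g := by
    apply Continuous.subtype_mk
    continuity
  have hopen : IsOpen (g ⁻¹' interior ((↑) ⁻¹' Δ : Set (affineSpan ℝ Δ))) :=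
    isOpen_interior.preimage hgc
  have h0 : (0 : ℝ) ∈ g ⁻¹' interior ((↑) ⁻¹' Δ : Set (affineSpan ℝ Δ)) := by
    have : g 0 = y := by
      apply Subtype.ext
      simp [g, hyx]
    simpa [this] using hy
  obtain ⟨ε, hε, hball⟩ := Metric.isOpen_iff.1 hopen 0 h0
  refine ⟨ε / 2, by linarith, ?_⟩
  have hmemball : g (ε / 2) ∈ interior ((↑) ⁻¹' Δ : Set (affineSpan ℝ Δ)) := by
    apply hball
    rw [Metric.mem_ball, Real.dist_eq, sub_zero, abs_of_pos (by linarith)]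
    linarith
  have := interior_subset (s := ((↑) ⁻¹' Δ : Set (affineSpan ℝ Δ))) hmemball
  exact this

lemma subdiff_transfer {n : ℕ} (Φ : EuclideanSpace ℝ (Fin n) → ℝ)
    (Δ : Set (EuclideanSpace ℝ (Fin n)))
    (l : EuclideanSpace ℝ (Fin n) →ₗ[ℝ] ℝ) (c : ℝ)
    (haff : ∀ z ∈ Δ, Φ z = l z + c)
    {x v w : EuclideanSpace ℝ (Fin n)}
    (hx : x ∈ intrinsicInterior ℝ Δ) (hv : v ∈ Δ)
    (hw : w ∈ subdiff Φ x) : w ∈ subdiff Φ v := by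
  have hxΔ : x ∈ Δ := intrinsicInterior_subset hx
  obtain ⟨t, ht, hp⟩ := exists_pos_extend hx hv
  have key : ⟪w, x - v⟫ ≤ Φ x - Φ v := by
    have h1 := hw (x + t • (x - v))
    have h2 : Φ (x + t • (x - v)) = Φ x + t * (Φ x - Φ v) := by
      rw [haff _ hp, haff _ hxΔ, haff _ hv]
      simp [map_add, map_smul, map_sub]
      ring
    rw [h2] at h1
    have h3 : ⟪w, x + t • (x - v) - x⟫ = t * ⟪w, x - v⟫ := by
      have : x + t • (x - v) - x = t • (x - v) := by abel
      rw [this, real_inner_smul_right]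
    rw [h3] at h1
    have h6 : t * ⟪w, x - v⟫ ≤ t * (Φ x - Φ v) := by linarith
    have h7 := le_of_mul_le_mul_left h6 ht
    linarith
  intro y
  have h4 := hw y
  have h5 : ⟪w, y - v⟫ = ⟪w, y - x⟫ + ⟪w, x - v⟫ := by
    rw [← inner_add_right]
    congr 1
    abel
  rw [h5]
  linarith

/-- if two convex functions are affine on a convex polytope `Δ` and
`(λ, x)` is an eigenpair of the pair `(F, G)` for some point `x` in the intrinsic
interior of `Δ`, then `(λ, v)` is an eigenpair for every extreme point `v` of `Δ`. -/
theorem stmt_4 {n : ℕ} (F G : EuclideanSpace ℝ (Fin n) → ℝ)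
    (hF : ConvexOn ℝ Set.univ F) (hG : ConvexOn ℝ Set.univ G)
    (S : Finset (EuclideanSpace ℝ (Fin n)))
    (Δ : Set (EuclideanSpace ℝ (Fin n)))
    (hΔ : Δ = convexHull ℝ (S : Set (EuclideanSpace ℝ (Fin n))))
    (hFaff : ∃ (l : EuclideanSpace ℝ (Fin n) →ₗ[ℝ] ℝ) (c : ℝ), ∀ z ∈ Δ, F z = l z + c)
    (hGaff : ∃ (l : EuclideanSpace ℝ (Fin n) →ₗ[ℝ] ℝ) (c : ℝ), ∀ z ∈ Δ, G z = l z + c)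
    (lam : ℝ) (x : EuclideanSpace ℝ (Fin n))
    (hx : x ∈ intrinsicInterior ℝ Δ)
    (heig : (subdiff F x ∩ ((fun u => lam • u) '' subdiff G x)).Nonempty) :
    ∀ v ∈ Set.extremePoints ℝ Δ,
      (subdiff F v ∩ ((fun u => lam • u) '' subdiff G v)).Nonempty := by
  obtain ⟨lF, cF, hlF⟩ := hFaff
  obtain ⟨lG, cG, hlG⟩ := hGaff
  obtain ⟨w, hwF, u, huG, huw⟩ := heig
  intro v hv
  have hvΔ : v ∈ Δ := hv.1
  exact ⟨w, subdiff_transfer F Δ lF cF hlF hx hvΔ hwF,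
    u, subdiff_transfer G Δ lG cG hlG hx hvΔ huG, huw⟩
end

section
/- Let G be a finite simple graph on vertex set V, let p > 1, and let φ_p(t) = |t|^{p−2}·t. Say λ ∈ ℝ is an eigenvalue of the (normalized) p-Laplacian of G if there exists x : V → ℝ, x ≠ 0, with ∑_{j ∼ i} φ_p(x_i − x_j) = λ·deg(i)·φ_p(x_i) for every vertex i, and an eigenvalue of the signless p-Laplacian if the same holds with x_i + x_j in place of x_i − x_j. If G is bipartite, then the set of eigenvalues of the p-Laplacian equals the set of eigenvalues of the signless p-Laplacian. If moreover G is connected, then these two sets of eigenvalues coincide if and only if G is bipartite. -/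
open Finset

private lemma phi_sign (p t e : ℝ) (he : e = 1 ∨ e = -1) :
    |e * t| ^ (p - 2) * (e * t) = e * (|t| ^ (p - 2) * t) := by
  have habs : |e * t| = |t| := by rcases he with h | h <;> simp [h, abs_mul]
  rw [habs]; ring

private lemma LtoS (n : ℕ) (G : SimpleGraph (Fin n)) [DecidableRel G.Adj]
    (p lam : ℝ) (c : Fin n → Bool) (hc : ∀ i j, G.Adj i j → c i ≠ c j)
    (x : Fin n → ℝ) (hx : x ≠ 0)
    (h : ∀ i, ∑ j ∈ G.neighborFinset i, |x i - x j| ^ (p - 2) * (x i - x j)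
        = lam * (G.degree i : ℝ) * (|x i| ^ (p - 2) * x i)) :
    ∃ y : Fin n → ℝ, y ≠ 0 ∧ ∀ i, ∑ j ∈ G.neighborFinset i,
      |y i + y j| ^ (p - 2) * (y i + y j)
        = lam * (G.degree i : ℝ) * (|y i| ^ (p - 2) * y i) := by
  set e : Fin n → ℝ := fun i => if c i then -1 else 1 with hedef
  have hei : ∀ i, e i = 1 ∨ e i = -1 := fun i => by
    by_cases h : c i <;> simp [hedef, h]
  refine ⟨fun i => e i * x i, ?_, ?_⟩
  · intro h0
    apply hx
    funext i
    have h1 := congrFun h0 i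
    simp only [Pi.zero_apply] at h1 ⊢
    rcases hei i with h2 | h2 <;> rw [h2] at h1 <;> linarith
  · intro i
    have hsum : ∀ j ∈ G.neighborFinset i,
        |e i * x i + e j * x j| ^ (p - 2) * (e i * x i + e j * x j)
          = e i * (|x i - x j| ^ (p - 2) * (x i - x j)) := by
      intro j hj
      have hadj := (G.mem_neighborFinset i j).1 hj
      have hcne := hc i j hadj
      have hej : e j = -(e i) := by
        rcases Bool.eq_false_or_eq_true (c i) with h1 | h1 <;>
          rcases Bool.eq_false_or_eq_true (c j) with h2 | h2 <;>
          simp [hedef, h1, h2] at hcne ⊢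
      have harg : e i * x i + e j * x j = e i * (x i - x j) := by rw [hej]; ring
      rw [harg, phi_sign p (x i - x j) (e i) (hei i)]
    calc ∑ j ∈ G.neighborFinset i,
          |e i * x i + e j * x j| ^ (p - 2) * (e i * x i + e j * x j)
        = ∑ j ∈ G.neighborFinset i, e i * (|x i - x j| ^ (p - 2) * (x i - x j)) :=
          Finset.sum_congr rfl hsum
      _ = e i * ∑ j ∈ G.neighborFinset i, |x i - x j| ^ (p - 2) * (x i - x j) :=
          (Finset.mul_sum _ _ _).symm
      _ = e i * (lam * (G.degree i : ℝ) * (|x i| ^ (p - 2) * x i)) := by rw [h i]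
      _ = lam * (G.degree i : ℝ) * (|e i * x i| ^ (p - 2) * (e i * x i)) := by
          rw [phi_sign p (x i) (e i) (hei i)]; ring

private lemma StoL (n : ℕ) (G : SimpleGraph (Fin n)) [DecidableRel G.Adj]
    (p lam : ℝ) (c : Fin n → Bool) (hc : ∀ i j, G.Adj i j → c i ≠ c j)
    (x : Fin n → ℝ) (hx : x ≠ 0)
    (h : ∀ i, ∑ j ∈ G.neighborFinset i, |x i + x j| ^ (p - 2) * (x i + x j)
        = lam * (G.degree i : ℝ) * (|x i| ^ (p - 2) * x i)) :
    ∃ y : Fin n → ℝ, y ≠ 0 ∧ ∀ i, ∑ j ∈ G.neighborFinset i,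
      |y i - y j| ^ (p - 2) * (y i - y j)
        = lam * (G.degree i : ℝ) * (|y i| ^ (p - 2) * y i) := by
  set e : Fin n → ℝ := fun i => if c i then -1 else 1 with hedef
  have hei : ∀ i, e i = 1 ∨ e i = -1 := fun i => by
    by_cases h : c i <;> simp [hedef, h]
  refine ⟨fun i => e i * x i, ?_, ?_⟩
  · intro h0
    apply hx
    funext i
    have h1 := congrFun h0 i
    simp only [Pi.zero_apply] at h1 ⊢
    rcases hei i with h2 | h2 <;> rw [h2] at h1 <;> linarith
  · intro i
    have hsum : ∀ j ∈ G.neighborFinset i,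
        |e i * x i - e j * x j| ^ (p - 2) * (e i * x i - e j * x j)
          = e i * (|x i + x j| ^ (p - 2) * (x i + x j)) := by
      intro j hj
      have hadj := (G.mem_neighborFinset i j).1 hj
      have hcne := hc i j hadj
      have hej : e j = -(e i) := by
        rcases Bool.eq_false_or_eq_true (c i) with h1 | h1 <;>
          rcases Bool.eq_false_or_eq_true (c j) with h2 | h2 <;>
          simp [hedef, h1, h2] at hcne ⊢
      have harg : e i * x i - e j * x j = e i * (x i + x j) := by rw [hej]; ring
      rw [harg, phi_sign p (x i + x j) (e i) (hei i)]
    calc ∑ j ∈ G.neighborFinset i,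
          |e i * x i - e j * x j| ^ (p - 2) * (e i * x i - e j * x j)
        = ∑ j ∈ G.neighborFinset i, e i * (|x i + x j| ^ (p - 2) * (x i + x j)) :=
          Finset.sum_congr rfl hsum
      _ = e i * ∑ j ∈ G.neighborFinset i, |x i + x j| ^ (p - 2) * (x i + x j) :=
          (Finset.mul_sum _ _ _).symm
      _ = e i * (lam * (G.degree i : ℝ) * (|x i| ^ (p - 2) * x i)) := by rw [h i]
      _ = lam * (G.degree i : ℝ) * (|e i * x i| ^ (p - 2) * (e i * x i)) := by
          rw [phi_sign p (x i) (e i) (hei i)]; ring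

private lemma signless_zero_bip (n : ℕ) (G : SimpleGraph (Fin n)) [DecidableRel G.Adj]
    (p : ℝ) (hconn : G.Connected)
    (x : Fin n → ℝ) (hx : x ≠ 0)
    (h : ∀ i, ∑ j ∈ G.neighborFinset i, |x i + x j| ^ (p - 2) * (x i + x j) = 0) :
    ∃ c : Fin n → Bool, ∀ i j, G.Adj i j → c i ≠ c j := by
  -- Step 1: every edge satisfies x i + x j = 0
  have hnn : ∀ i j : Fin n, 0 ≤ |x i + x j| ^ (p - 2) * (x i + x j) * (x i + x j) := by
    intro i j
    rw [mul_assoc]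
    exact mul_nonneg (Real.rpow_nonneg (abs_nonneg _) _) (mul_self_nonneg _)
  have hA : ∑ i, ∑ j ∈ G.neighborFinset i,
      |x i + x j| ^ (p - 2) * (x i + x j) * x i = 0 := by
    refine Finset.sum_eq_zero fun i _ => ?_
    rw [← Finset.sum_mul, h i, zero_mul]
  have hB : ∑ i, ∑ j ∈ G.neighborFinset i,
      |x i + x j| ^ (p - 2) * (x i + x j) * x j = 0 := by
    have h1 : ∑ i, ∑ j ∈ G.neighborFinset i,
        |x i + x j| ^ (p - 2) * (x i + x j) * x j
        = ∑ i : Fin n, ∑ j : Fin n,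
            if G.Adj i j then |x i + x j| ^ (p - 2) * (x i + x j) * x j else 0 := by
      refine Finset.sum_congr rfl fun i _ => ?_
      rw [SimpleGraph.neighborFinset_eq_filter, Finset.sum_filter]
    rw [h1, Finset.sum_comm]
    refine Finset.sum_eq_zero fun j _ => ?_
    have h2 : ∑ i : Fin n,
        (if G.Adj i j then |x i + x j| ^ (p - 2) * (x i + x j) * x j else 0)
        = ∑ i ∈ G.neighborFinset j, |x j + x i| ^ (p - 2) * (x j + x i) * x j := by
      rw [SimpleGraph.neighborFinset_eq_filter, Finset.sum_filter]
      refine Finset.sum_congr rfl fun i _ => ?_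
      by_cases hadj : G.Adj i j
      · rw [if_pos hadj, if_pos hadj.symm, add_comm (x i) (x j)]
      · rw [if_neg hadj, if_neg fun hh => hadj hh.symm]
    rw [h2, ← Finset.sum_mul, h j, zero_mul]
  have hS : ∑ i, ∑ j ∈ G.neighborFinset i,
      |x i + x j| ^ (p - 2) * (x i + x j) * (x i + x j) = 0 := by
    have : ∀ i, ∑ j ∈ G.neighborFinset i,
        |x i + x j| ^ (p - 2) * (x i + x j) * (x i + x j)
        = (∑ j ∈ G.neighborFinset i, |x i + x j| ^ (p - 2) * (x i + x j) * x i)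
          + ∑ j ∈ G.neighborFinset i, |x i + x j| ^ (p - 2) * (x i + x j) * x j := by
      intro i
      rw [← Finset.sum_add_distrib]
      exact Finset.sum_congr rfl fun j _ => by ring
    calc ∑ i, ∑ j ∈ G.neighborFinset i,
          |x i + x j| ^ (p - 2) * (x i + x j) * (x i + x j)
        = (∑ i, ∑ j ∈ G.neighborFinset i, |x i + x j| ^ (p - 2) * (x i + x j) * x i)
          + ∑ i, ∑ j ∈ G.neighborFinset i, |x i + x j| ^ (p - 2) * (x i + x j) * x j := by
          rw [← Finset.sum_add_distrib]; exact Finset.sum_congr rfl fun i _ => this i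
      _ = 0 := by rw [hA, hB, add_zero]
  have key : ∀ i j, G.Adj i j → x i + x j = 0 := by
    intro i j hadj
    have h1 := (Finset.sum_eq_zero_iff_of_nonneg
      (fun i _ => Finset.sum_nonneg fun j _ => hnn i j)).1 hS i (Finset.mem_univ i)
    have h2 := (Finset.sum_eq_zero_iff_of_nonneg (fun j _ => hnn i j)).1 h1 j
      ((G.mem_neighborFinset i j).2 hadj)
    by_contra ht
    have hpos : 0 < |x i + x j| ^ (p - 2) * ((x i + x j) * (x i + x j)) :=
      mul_pos (Real.rpow_pos_of_pos (abs_pos.2 ht) _) (mul_self_pos.2 ht)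
    rw [mul_assoc] at h2
    linarith
  -- Step 2: x never vanishes
  obtain ⟨i0, hi0⟩ : ∃ i, x i ≠ 0 := by
    by_contra hcon
    push_neg at hcon
    exact hx (funext hcon)
  have step : ∀ a b : Fin n, G.Adj a b → x a ≠ 0 → x b ≠ 0 := by
    intro a b hadj ha hb
    have := key a b hadj
    apply ha; linarith
  have hwalk : ∀ (a b : Fin n) (_ : G.Walk a b), x a ≠ 0 → x b ≠ 0 := by
    intro a b w
    induction w with
    | nil => exact id
    | cons hadj w ih => exact fun ha => ih (step _ _ hadj ha)
  have hall : ∀ i, x i ≠ 0 := by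
    intro i
    obtain ⟨w⟩ := hconn.preconnected i0 i
    exact hwalk i0 i w hi0
  -- Step 3: the coloring
  refine ⟨fun i => decide (0 < x i), ?_⟩
  intro i j hadj
  have hij := key i j hadj
  simp only [ne_eq, decide_eq_decide]
  intro hiff
  rcases lt_or_gt_of_ne (hall i) with h1 | h1
  · have h2 : 0 < x j := by linarith
    have := hiff.2 h2
    linarith
  · have := hiff.1 h1
    linarith

/-- for a finite simple graph, if it is bipartite then the spectra of the
normalized `p`-Laplacian and of the signless `p`-Laplacian coincide; if moreover the
graph is connected, the two spectra coincide if and only if the graph is bipartite. -/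
theorem stmt_9 {n : ℕ} (G : SimpleGraph (Fin n)) [DecidableRel G.Adj]
    (p : ℝ) (hp : 1 < p) :
    let phi : ℝ → ℝ := fun t => |t| ^ (p - 2) * t
    let specL : Set ℝ := {lam | ∃ x : Fin n → ℝ, x ≠ 0 ∧ ∀ i,
        ∑ j ∈ G.neighborFinset i, phi (x i - x j) = lam * (G.degree i : ℝ) * phi (x i)}
    let specS : Set ℝ := {lam | ∃ x : Fin n → ℝ, x ≠ 0 ∧ ∀ i,
        ∑ j ∈ G.neighborFinset i, phi (x i + x j) = lam * (G.degree i : ℝ) * phi (x i)}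
    let Bip : Prop := ∃ c : Fin n → Bool, ∀ i j, G.Adj i j → c i ≠ c j
    (Bip → specL = specS) ∧ (G.Connected → (specL = specS ↔ Bip)) := by
  intro phi specL specS Bip
  have hmain : Bip → specL = specS := by
    rintro ⟨c, hc⟩
    ext lam
    constructor
    · rintro ⟨x, hx, h⟩
      exact LtoS n G p lam c hc x hx h
    · rintro ⟨x, hx, h⟩
      exact StoL n G p lam c hc x hx h
  refine ⟨hmain, fun hconn => ⟨?_, hmain⟩⟩
  intro heq
  have hne : Nonempty (Fin n) := hconn.nonempty
  have h0L : (0 : ℝ) ∈ specL := by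
    refine ⟨fun _ => 1, ?_, fun i => ?_⟩
    · intro hcon
      have := congrFun hcon hne.some
      simp at this
    · show ∑ j ∈ G.neighborFinset i, phi (1 - 1) = 0 * (G.degree i : ℝ) * phi 1
      simp [phi]
  rw [heq] at h0L
  obtain ⟨x, hx, h⟩ := h0L
  refine signless_zero_bip n G p hconn x hx fun i => ?_
  have := h i
  rw [zero_mul, zero_mul] at this
  exact this
end

section
/- Let V = {1,…,n}, let E be a nonempty finite index set, and let p ≥ 1. For each e ∈ E let f_e : P(V) → [0,∞) satisfy f_e(∅) = f_e(V) = 0, and let g_e : P(V) → [0,∞) be modular with g_e(∅) = 0, i.e. g_e(A) = ∑_{i∈A} g_e({i}); set f(A) = ∑_{e∈E} f_e(A), g(A) = ∑_{e∈E} g_e(A), and assume g({i}) > 0 for every i ∈ V. Define the Lovász extension f_e^L(x) = ∫_{min_i x_i}^{max_i x_i} f_e({i : x_i > t}) dt for x ∈ ℝⁿ, the Cheeger constant h = min over A ⊆ V with A ∉ {∅, V} of min{f(A), f(V∖A)} / min{g(A), g(V∖A)}, and λ = inf over nonconstant x ∈ ℝⁿ of (∑_{e∈E} (f_e^L(x))^p)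 / (min_{c∈ℝ} ∑_{i∈V} g({i})·|x_i − c|^p). Then λ ≤ (2C)^{p−1}·h, where C = max_{e∈E, A⊆V} f_e(A). If additionally for every e ∈ E and i ∈ V one has g_e({i}) ≥ 1 whenever f_e(S∖{i}) ≠ f_e(S) for some S ⊆ V, then also h^p / p^p ≤ λ. -/
open Finset MeasureTheory

/-- The (original) Lovász extension
`f^L(x) = ∫_{min_i x_i}^{max_i x_i} f({i : x_i > t}) dt` of a set function `f`
vanishing on `∅` and on `V`. -/
noncomputable def lovaszExt {n : ℕ} (f : Finset (Fin n) → ℝ) (x : Fin n → ℝ) : ℝ :=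
  ∫ t in (⨅ i, x i)..(⨆ i, x i), f (Finset.univ.filter fun i => t < x i)



lemma mono_of_step {k : ℕ} {b : ℕ → ℝ} (h : ∀ j < k, b j ≤ b (j+1)) :
    ∀ {i j : ℕ}, i ≤ j → j ≤ k → b i ≤ b j := by
  intro i j hij hjk
  induction j with
  | zero => simp_all
  | succ m ih =>
    rcases Nat.eq_or_lt_of_le hij with rfl | hlt
    · exact le_refl _
    · exact le_trans (ih (Nat.lt_succ_iff.mp hlt) (le_trans (Nat.le_succ m) hjk))
        (h m (Nat.lt_of_lt_of_le (Nat.lt_succ_self m) hjk))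

/-- Telescoping sum with a strict-lower-cut indicator. -/
lemma tele_lt : ∀ (k : ℕ) (b : ℕ → ℝ), (∀ j < k, b j ≤ b (j+1)) → ∀ m ≤ k,
    ∑ j ∈ range k, (if b j < b m then b (j+1) - b j else 0) = b m - b 0 := by
  intro k
  induction k with
  | zero => intro b _ m hm; interval_cases m; simp
  | succ k ih =>
    intro b hmono m hm
    have hmono' : ∀ j < k, b j ≤ b (j+1) := fun j hj => hmono j (Nat.lt_succ_of_lt hj)
    rw [Finset.sum_range_succ]
    rcases Nat.lt_succ_iff_lt_or_eq.mp (Nat.lt_succ_of_le hm) with hmk | rfl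
    · have hmk' : m ≤ k := Nat.lt_succ_iff.mp hmk
      have : ¬ b k < b m := not_lt.mpr (mono_of_step hmono' hmk' le_rfl)
      rw [if_neg this, add_zero, ih b hmono' m hmk']
    · -- m = k+1
      by_cases hlt : b k < b (k+1)
      · rw [if_pos hlt]
        have : ∑ j ∈ range k, (if b j < b (k+1) then b (j+1) - b j else 0)
            = ∑ j ∈ range k, (if b j < b k then b (j+1) - b j else 0) := by
          apply Finset.sum_congr rfl
          intro j hj
          rw [Finset.mem_range] at hj
          by_cases h1 : b j < b k
          · rw [if_pos h1, if_pos (lt_of_lt_of_le h1 (le_of_lt hlt))]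
          · have hbk : b j = b k :=
              le_antisymm (mono_of_step hmono' (le_of_lt hj) le_rfl) (not_lt.mp h1)
            rw [if_neg h1]
            by_cases h2 : b j < b (k+1)
            · rw [if_pos h2]
              have h3 : b (j+1) ≤ b k := mono_of_step hmono' hj le_rfl
              have h4 : b j ≤ b (j+1) := hmono' j hj
              have : b (j+1) = b j := le_antisymm (hbk ▸ h3) h4
              rw [this, sub_self]
            · rw [if_neg h2]
        rw [this, ih b hmono' k le_rfl]
        ring
      · have heq : b (k+1) = b k :=
          le_antisymm (not_lt.mp hlt) (hmono k (Nat.lt_succ_self k))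
        rw [if_neg hlt, add_zero, heq, ih b hmono' k le_rfl]

/-- Telescoping sum with a strict-upper-cut indicator. -/
lemma tele_gt (k : ℕ) (c : ℕ → ℝ) (hmono : ∀ j < k, c j ≤ c (j+1)) (m : ℕ) (hm : m ≤ k) :
    ∑ j ∈ range k, (if c m < c (j+1) then c (j+1) - c j else 0) = c k - c m := by
  have hb : ∀ j < k, (fun j => -c (k - j)) j ≤ (fun j => -c (k - j)) (j+1) := by
    intro j hj
    simp only [neg_le_neg_iff]
    have h1 : k - (j+1) ≤ k - j := Nat.sub_le_sub_left (Nat.le_succ j) k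
    exact mono_of_step hmono h1 (Nat.sub_le k j)
  have := tele_lt k (fun j => -c (k - j)) hb (k - m) (Nat.sub_le k m)
  simp only [Nat.sub_sub_self hm, Nat.sub_zero, neg_lt_neg_iff] at this
  rw [← Finset.sum_range_reflect] at this
  have hcongr : ∀ j ∈ range k,
      (if c m < c (k - (k-1-j)) then -c (k - (k - 1 - j + 1)) - -c (k - (k-1-j)) else 0)
      = (if c m < c (j+1) then c (j+1) - c j else 0) := by
    intro j hj
    rw [Finset.mem_range] at hj
    have e1 : k - (k - 1 - j) = j + 1 := by omega
    have e2 : k - (k - 1 - j + 1) = j := by omega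
    rw [e1, e2]
    by_cases h : c m < c (j+1)
    · rw [if_pos h, if_pos h]; ring
    · rw [if_neg h, if_neg h]

  rw [Finset.sum_congr rfl hcongr] at this
  linarith [this]

/-- signed power -/
noncomputable def sgnPow (p t : ℝ) : ℝ := if 0 ≤ t then t ^ p else -((-t) ^ p)

lemma sgnPow_nonneg_eq {p t : ℝ} (ht : 0 ≤ t) : sgnPow p t = t ^ p := if_pos ht

lemma sgnPow_zero {p : ℝ} (hp : p ≠ 0) : sgnPow p 0 = 0 := by
  simp [sgnPow, Real.zero_rpow hp]

lemma sgnPow_neg_eq {p t : ℝ} (hp : p ≠ 0) (ht : t ≤ 0) : sgnPow p t = -((-t) ^ p) := by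
  rcases lt_or_eq_of_le ht with h | rfl
  · exact if_neg (not_le.mpr h)
  · simp [sgnPow_zero hp, Real.zero_rpow hp]

lemma sgnPow_strictMono {p : ℝ} (hp : 1 ≤ p) : StrictMono (sgnPow p) := by
  have hp0 : 0 < p := lt_of_lt_of_le one_pos hp
  intro s t hst
  rcases le_or_gt 0 s with hs | hs
  · rw [sgnPow_nonneg_eq hs, sgnPow_nonneg_eq (le_of_lt (lt_of_le_of_lt hs hst))]
    exact Real.rpow_lt_rpow hs hst hp0
  · rw [sgnPow_neg_eq (ne_of_gt hp0) (le_of_lt hs)]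
    rcases le_or_gt 0 t with ht | ht
    · rw [sgnPow_nonneg_eq ht]
      have h1 : 0 < (-s) ^ p := Real.rpow_pos_of_pos (by linarith) p
      have h2 : 0 ≤ t ^ p := Real.rpow_nonneg ht p
      linarith
    · rw [sgnPow_neg_eq (ne_of_gt hp0) (le_of_lt ht)]
      have : (-t) ^ p < (-s) ^ p := Real.rpow_lt_rpow (by linarith) (by linarith) hp0
      linarith

lemma sgnPow_mono {p : ℝ} (hp : 1 ≤ p) : Monotone (sgnPow p) :=
  (sgnPow_strictMono hp).monotone

/-- core convexity ineq : b^p - a^p ≤ p b^(p-1) (b-a) for 0 ≤ a ≤ b -/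
lemma rpow_sub_le {p a b : ℝ} (hp : 1 ≤ p) (ha : 0 ≤ a) (hab : a ≤ b) :
    b ^ p - a ^ p ≤ p * b ^ (p-1) * (b - a) := by
  rcases eq_or_lt_of_le hab with rfl | hlt
  · simp
  · have hcont : ContinuousOn (fun x : ℝ => x ^ p) (Set.Icc a b) := by
      apply Continuous.continuousOn
      have : ∀ x : ℝ, HasDerivAt (fun y : ℝ => y ^ p) (p * x ^ (p-1)) x :=
        fun x => Real.hasDerivAt_rpow_const (Or.inr hp)
      exact continuous_iff_continuousAt.mpr fun x => (this x).continuousAt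
    obtain ⟨c, hc, hceq⟩ := exists_hasDerivAt_eq_slope (fun y : ℝ => y ^ p)
      (fun x => p * x ^ (p-1)) hlt hcont
      (fun x _ => Real.hasDerivAt_rpow_const (Or.inr hp))
    have hc0 : 0 ≤ c := le_trans ha (le_of_lt hc.1)
    have hbound : p * c ^ (p-1) ≤ p * b ^ (p-1) := by
      apply mul_le_mul_of_nonneg_left _ (by linarith)
      exact Real.rpow_le_rpow hc0 (le_of_lt (lt_of_lt_of_le hc.2 le_rfl)) (by linarith)
    have hslope : (b ^ p - a ^ p) / (b - a) ≤ p * b ^ (p-1) := hceq ▸ hbound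
    calc b ^ p - a ^ p = (b ^ p - a ^ p) / (b - a) * (b - a) := by
          rw [div_mul_cancel₀]
          exact ne_of_gt (by linarith)
      _ ≤ p * b ^ (p-1) * (b - a) := by
          apply mul_le_mul_of_nonneg_right hslope (by linarith)

/-- MVT-type bound for the signed power. -/
lemma sgnPow_diff_le {p a b M : ℝ} (hp : 1 ≤ p) (hab : a ≤ b)
    (ha : |a| ≤ M) (hb : |b| ≤ M) :
    sgnPow p b - sgnPow p a ≤ p * M ^ (p-1) * (b - a) := by
  have hM : 0 ≤ M := le_trans (abs_nonneg a) ha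
  have hMp : ∀ {x : ℝ}, 0 ≤ x → |x| ≤ M → x ^ p ≤ M ^ (p-1) * x := by
    intro x hx hxM
    have h1 : x ^ p = x ^ (p-1) * x := by
      rcases eq_or_lt_of_le hx with rfl | hx'
      · rw [Real.zero_rpow (by linarith), mul_zero]
      · rw [← Real.rpow_add_one (ne_of_gt hx')]; ring_nf
    rw [h1]
    apply mul_le_mul_of_nonneg_right _ hx
    exact Real.rpow_le_rpow hx (by rwa [abs_of_nonneg hx] at hxM) (by linarith)
  rcases le_or_gt 0 a with ha0 | ha0
  · -- 0 ≤ a ≤ b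
    have hb0 : 0 ≤ b := le_trans ha0 hab
    rw [sgnPow_nonneg_eq ha0, sgnPow_nonneg_eq hb0]
    calc b ^ p - a ^ p ≤ p * b ^ (p-1) * (b - a) := rpow_sub_le hp ha0 hab
      _ ≤ p * M ^ (p-1) * (b - a) := by
          apply mul_le_mul_of_nonneg_right _ (by linarith)
          apply mul_le_mul_of_nonneg_left _ (by linarith)
          exact Real.rpow_le_rpow hb0 (by rwa [abs_of_nonneg hb0] at hb) (by linarith)
  · rcases le_or_gt b 0 with hb0 | hb0
    · -- a < 0, b ≤ 0
      rw [sgnPow_neg_eq (by linarith) (le_of_lt ha0), sgnPow_neg_eq (by linarith) hb0]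
      have : (-a) ^ p - (-b) ^ p ≤ p * (-a) ^ (p-1) * ((-a) - (-b)) :=
        rpow_sub_le hp (by linarith) (by linarith)
      have h2 : p * (-a) ^ (p-1) * ((-a) - (-b)) ≤ p * M ^ (p-1) * (b - a) := by
        have : (-a) - (-b) = b - a := by ring
        rw [this]
        apply mul_le_mul_of_nonneg_right _ (by linarith)
        apply mul_le_mul_of_nonneg_left _ (by linarith)
        exact Real.rpow_le_rpow (by linarith) (by rw [abs_of_neg ha0] at ha; linarith) (by linarith)
      linarith
    · -- a < 0 < b
      rw [sgnPow_neg_eq (by linarith) (le_of_lt ha0), sgnPow_nonneg_eq (le_of_lt hb0)]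
      have h1 : b ^ p ≤ M ^ (p-1) * b := hMp (le_of_lt hb0) hb
      have h2 : (-a) ^ p ≤ M ^ (p-1) * (-a) := hMp (by linarith) (by rw [abs_of_nonneg (by linarith : (0:ℝ) ≤ -a)]; rw [abs_of_neg ha0] at ha; linarith)
      have hM1 : 0 ≤ M ^ (p-1) := Real.rpow_nonneg hM _
      have hpb : M ^ (p-1) * b ≤ p * (M ^ (p-1) * b) := le_mul_of_one_le_left (mul_nonneg hM1 (le_of_lt hb0)) hp
      have hpa : M ^ (p-1) * (-a) ≤ p * (M ^ (p-1) * (-a)) := le_mul_of_one_le_left (mul_nonneg hM1 (by linarith)) hp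
      nlinarith [h1, h2]



/-- Closed form of the Lovász extension along a partition of values. -/
lemma lovasz_closed {n : ℕ} (f : Finset (Fin n) → ℝ) (x : Fin n → ℝ) (k : ℕ) (a : ℕ → ℝ)
    (hmono : ∀ j < k, a j ≤ a (j+1)) (h0 : a 0 = ⨅ i, x i) (hk : a k = ⨆ i, x i)
    (hgap : ∀ i, ∀ j < k, ¬(a j < x i ∧ x i < a (j+1))) :
    lovaszExt f x =
      ∑ j ∈ range k, (a (j+1) - a j) * f (Finset.univ.filter fun i => a j < x i) := by
  have key : ∀ j < k, (∫ t in (a j)..(a (j+1)), f (Finset.univ.filter fun i => t < x i))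
      = (a (j+1) - a j) * f (Finset.univ.filter fun i => a j < x i) := by
    intro j hj
    have hle : a j ≤ a (j+1) := hmono j hj
    have hset : ∀ t, t ∈ Set.Ioo (a j) (a (j+1)) →
        (Finset.univ.filter fun i => t < x i) = (Finset.univ.filter fun i => a j < x i) := by
      intro t ht
      ext i
      simp only [Finset.mem_filter, Finset.mem_univ, true_and]
      constructor
      · intro h; exact lt_trans ht.1 h
      · intro h
        have := hgap i j hj
        push_neg at this
        exact lt_of_lt_of_le ht.2 (this h)
    have hae : ∀ᵐ t : ℝ, t ∈ Set.uIoc (a j) (a (j+1)) →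
        f (Finset.univ.filter fun i => t < x i) = f (Finset.univ.filter fun i => a j < x i) := by
      have hsing : (volume : Measure ℝ) {a (j+1)} = 0 := measure_singleton _
      filter_upwards [measure_eq_zero_iff_ae_notMem.mp hsing] with t ht hmem
      rw [Set.uIoc_of_le hle] at hmem
      have : t ∈ Set.Ioo (a j) (a (j+1)) :=
        ⟨hmem.1, lt_of_le_of_ne hmem.2 (by simpa using ht)⟩
      rw [hset t this]
    rw [intervalIntegral.integral_congr_ae hae, intervalIntegral.integral_const, smul_eq_mul]
  have hint : ∀ j < k, IntervalIntegrable
      (fun t => f (Finset.univ.filter fun i => t < x i)) volume (a j) (a (j+1)) := by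
    intro j hj
    have hle : a j ≤ a (j+1) := hmono j hj
    rw [intervalIntegrable_iff, Set.uIoc_of_le hle]
    have hsing : (volume : Measure ℝ) {a (j+1)} = 0 := measure_singleton _
    have hae : ∀ᵐ t : ℝ, t ∈ Set.Ioc (a j) (a (j+1)) →
        f (Finset.univ.filter fun i => a j < x i) = f (Finset.univ.filter fun i => t < x i) := by
      filter_upwards [measure_eq_zero_iff_ae_notMem.mp hsing] with t ht hmem
      have htIoo : t ∈ Set.Ioo (a j) (a (j+1)) :=
        ⟨hmem.1, lt_of_le_of_ne hmem.2 (by simpa using ht)⟩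
      have hset : (Finset.univ.filter fun i => t < x i)
          = (Finset.univ.filter fun i => a j < x i) := by
        ext i
        simp only [Finset.mem_filter, Finset.mem_univ, true_and]
        constructor
        · intro h; exact lt_trans htIoo.1 h
        · intro h
          have := hgap i j hj
          push_neg at this
          exact lt_of_lt_of_le htIoo.2 (this h)
      rw [hset]
    exact (integrableOn_const measure_Ioc_lt_top.ne).congr
      ((ae_restrict_iff' measurableSet_Ioc).mpr hae)
  have := intervalIntegral.sum_integral_adjacent_intervals hint
  rw [h0, hk] at this
  rw [lovaszExt, ← this]
  exact Finset.sum_congr rfl (fun j hj => key j (Finset.mem_range.mp hj))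


/-- A strictly increasing enumeration of the values of `x`. -/
lemma exists_partition {n : ℕ} [Nonempty (Fin n)] (x : Fin n → ℝ) :
    ∃ (k : ℕ) (a : ℕ → ℝ),
      (∀ j < k, a j < a (j+1)) ∧ a 0 = ⨅ i, x i ∧ a k = ⨆ i, x i ∧
      (∀ i, ∃ j ≤ k, a j = x i) ∧ (∀ j ≤ k, ∃ i, a j = x i) := by
  classical
  set T : Finset ℝ := Finset.image x Finset.univ with hT
  have hTne : T.Nonempty := ⟨x (Classical.arbitrary _), Finset.mem_image_of_mem x (mem_univ _)⟩
  have hcard : 0 < T.card := Finset.card_pos.mpr hTne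
  set k : ℕ := T.card - 1 with hk
  have hcardk : T.card = k + 1 := by omega
  set e := T.orderIsoOfFin hcardk with he
  set a : ℕ → ℝ := fun j => (e ⟨min j k, by omega⟩ : ℝ) with ha
  have hmem : ∀ j, (a j : ℝ) ∈ T := fun j => (e ⟨min j k, by omega⟩).2
  have hstrict : ∀ j < k, a j < a (j+1) := by
    intro j hj
    have h1 : min j k = j := min_eq_left (le_of_lt hj)
    have h2 : min (j+1) k = j + 1 := min_eq_left hj
    simp only [ha, h1, h2]
    have : (⟨j, by omega⟩ : Fin (k+1)) < ⟨j+1, by omega⟩ := by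
      simp [Fin.lt_def]
    exact_mod_cast e.strictMono this
  have hmonole : ∀ {i j}, i ≤ j → a i ≤ a j := by
    intro i j hij
    have : (⟨min i k, by omega⟩ : Fin (k+1)) ≤ ⟨min j k, by omega⟩ := by
      simp [Fin.le_def]; omega
    exact_mod_cast e.monotone this
  have hsurj : ∀ v ∈ T, ∃ j ≤ k, a j = v := by
    intro v hv
    obtain ⟨m, hm⟩ := e.surjective ⟨v, hv⟩
    refine ⟨m.1, by omega, ?_⟩
    simp only [ha]
    have : min (m.1) k = m.1 := min_eq_left (by omega)
    rw [show (⟨min m.1 k, by omega⟩ : Fin (k+1)) = m from by ext; simp [this], hm]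
  have hvals : ∀ i, ∃ j ≤ k, a j = x i :=
    fun i => hsurj (x i) (Finset.mem_image_of_mem x (mem_univ _))
  have hofj : ∀ j ≤ k, ∃ i, a j = x i := by
    intro j _
    obtain ⟨i, _, hi⟩ := Finset.mem_image.mp (hmem j)
    exact ⟨i, hi.symm⟩
  refine ⟨k, a, hstrict, ?_, ?_, hvals, hofj⟩
  · -- a 0 = ⨅
    obtain ⟨i0, hi0⟩ := hofj 0 (Nat.zero_le k)
    apply le_antisymm
    · apply le_ciInf
      intro i
      obtain ⟨j, _, hj⟩ := hvals i
      rw [← hj]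
      exact hmonole (Nat.zero_le j)
    · rw [hi0]
      exact ciInf_le (Set.Finite.bddBelow (Set.finite_range x)) i0
  · obtain ⟨ik, hik⟩ := hofj k le_rfl
    apply le_antisymm
    · rw [hik]
      exact le_ciSup (Set.Finite.bddAbove (Set.finite_range x)) ik
    · apply ciSup_le
      intro i
      obtain ⟨j, hjk, hj⟩ := hvals i
      rw [← hj]
      exact hmonole hjk


/-- f depends only on its support. -/
lemma supp_reduce {n : ℕ} (f : Finset (Fin n) → ℝ) (supp : Finset (Fin n))
    (hsupp : ∀ i ∉ supp, ∀ S : Finset (Fin n), f (S.erase i) = f S) :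
    ∀ S : Finset (Fin n), f (S ∩ supp) = f S := by
  classical
  have hdiff : ∀ B : Finset (Fin n), (∀ i ∈ B, i ∉ supp) → ∀ S, f (S \ B) = f S := by
    intro B
    induction B using Finset.induction_on with
    | empty => intro _ S; simp
    | @insert i B hiB ih =>
      intro hB S
      have h1 : S \ insert i B = (S \ B).erase i := by
        ext j; simp [Finset.mem_sdiff, Finset.mem_erase, Finset.mem_insert]; tauto
      rw [h1, hsupp i (hB i (mem_insert_self i B)) (S \ B),
        ih (fun j hj => hB j (mem_insert_of_mem hj)) S]
  intro S
  have h2 : S ∩ supp = S \ suppᶜ := by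
    ext j; simp [Finset.mem_sdiff, Finset.mem_inter, Finset.mem_compl]
  rw [h2]
  exact hdiff suppᶜ (fun i hi => Finset.mem_compl.mp hi) S

/-- two-point power mean: `2^(1-p) ≤ s^p + t^p` when `s+t ≥ 1`. -/
lemma two_point_pow {p s t : ℝ} (hp : 1 ≤ p) (hs : 0 ≤ s) (ht : 0 ≤ t) (hst : 1 ≤ s + t) :
    (2:ℝ) ^ (1-p) ≤ s ^ p + t ^ p := by
  have key : ((s:ℝ) + t) ^ p ≤ (2:ℝ) ^ (p-1) * (s ^ p + t ^ p) := by
    have := NNReal.rpow_add_le_mul_rpow_add_rpow ⟨s, hs⟩ ⟨t, ht⟩ hp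
    have h2 := NNReal.coe_le_coe.mpr this
    push_cast at h2
    convert h2 using 2 <;> rfl
  have h1 : (1:ℝ) ≤ (s + t) ^ p := Real.one_le_rpow hst (by linarith)
  have h2p : (0:ℝ) < (2:ℝ) ^ (p-1) := Real.rpow_pos_of_pos two_pos _
  have : (1:ℝ) ≤ (2:ℝ) ^ (p-1) * (s ^ p + t ^ p) := le_trans h1 key
  have heq : (2:ℝ) ^ (1-p) = ((2:ℝ) ^ (p-1))⁻¹ := by
    rw [← Real.rpow_neg (by norm_num)]; ring_nf
  rw [heq, inv_le_iff_one_le_mul₀ h2p]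
  linarith [this]

/-- Hölder wrapper. -/
lemma holder_wrap {E : Type} [Fintype E] {p : ℝ} (hp : 1 ≤ p) (u v : E → ℝ)
    (hu : ∀ e, 0 ≤ u e) (hv : ∀ e, 0 ≤ v e) :
    ∑ e, u e ^ ((p-1)/p) * v e ≤ (∑ e, u e) ^ ((p-1)/p) * (∑ e, v e ^ p) ^ (1/p) := by
  rcases eq_or_lt_of_le hp with rfl | hp1
  · simp [Real.rpow_one]
  · have hpq : ((p/(p-1)) : ℝ).HolderConjugate p := by
      rw [Real.holderConjugate_iff]
      constructor
      · rw [lt_div_iff₀ (by linarith)]; linarith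
      · field_simp
        ring
    have := Real.inner_le_Lp_mul_Lq Finset.univ (fun e => u e ^ ((p-1)/p)) v hpq
    have hL : ∑ e, |u e ^ ((p-1)/p)| ^ (p/(p-1)) = ∑ e, u e := by
      apply Finset.sum_congr rfl
      intro e _
      rw [abs_of_nonneg (Real.rpow_nonneg (hu e) _), ← Real.rpow_mul (hu e)]
      rw [div_mul_div_comm]
      rw [show (p-1) * p / (p * (p-1)) = 1 by rw [mul_comm (p-1) p]; exact div_self (ne_of_gt (mul_pos (by linarith) (by linarith))), Real.rpow_one]
    have hR : ∑ e, |v e| ^ p = ∑ e, v e ^ p := by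
      apply Finset.sum_congr rfl
      intro e _
      rw [abs_of_nonneg (hv e)]
    rw [hL, hR] at this
    convert this using 3
    rw [one_div_div]


/-- The per-coordinate telescoping identity. -/
lemma key_sum {k : ℕ} {a : ℕ → ℝ} {p cstar xi : ℝ} (hp : 1 ≤ p)
    (hstrict : ∀ j < k, a j < a (j+1)) {m mi : ℕ} (hm : m ≤ k) (hmi : mi ≤ k)
    (ham : a m = cstar) (hami : a mi = xi) :
    (∑ j ∈ range k, (if cstar ≤ a j ∧ a j < xi
        then sgnPow p (a (j+1) - cstar) - sgnPow p (a j - cstar) else 0))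
    + (∑ j ∈ range k, (if a j < cstar ∧ xi ≤ a j
        then sgnPow p (a (j+1) - cstar) - sgnPow p (a j - cstar) else 0))
    = |xi - cstar| ^ p := by
  have hp0 : (0:ℝ) < p := lt_of_lt_of_le one_pos hp
  have hpne : p ≠ 0 := ne_of_gt hp0
  set b : ℕ → ℝ := fun j => sgnPow p (a j - cstar) with hb_def
  have hamono : ∀ j < k, a j ≤ a (j+1) := fun j hj => le_of_lt (hstrict j hj)
  have hmole : ∀ {i j : ℕ}, i ≤ j → j ≤ k → a i ≤ a j := fun hij hjk =>
    mono_of_step hamono hij hjk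
  have hlt_idx : ∀ {i j : ℕ}, i ≤ k → j ≤ k → a i < a j → i < j := by
    intro i j hik hjk hlt
    by_contra hc; push_neg at hc
    exact absurd (hmole hc hik) (not_le.mpr hlt)
  have hbmono : ∀ j < k, b j ≤ b (j+1) := fun j hj =>
    sgnPow_mono hp (by linarith [hstrict j hj])
  have hsm := sgnPow_strictMono hp
  have hs0 : sgnPow p 0 = 0 := sgnPow_zero hpne
  -- the clamped sequences
  set B : ℕ → ℝ := fun j => max (b j) 0 with hB_def
  set Cc : ℕ → ℝ := fun j => min (b j) 0 with hC_def
  have hBmono : ∀ j < k, B j ≤ B (j+1) := fun j hj =>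
    max_le_max (hbmono j hj) le_rfl
  have hCmono : ∀ j < k, Cc j ≤ Cc (j+1) := fun j hj =>
    min_le_min (hbmono j hj) le_rfl
  have hB0 : B 0 = 0 := by
    have h1 : a 0 ≤ cstar := ham ▸ hmole (Nat.zero_le m) hm
    have h2 : b 0 ≤ 0 := by
      rw [hb_def]; rw [← hs0]; exact sgnPow_mono hp (by linarith)
    simp only [hB_def]; exact max_eq_right h2
  have hCk : Cc k = 0 := by
    have h1 : cstar ≤ a k := ham ▸ hmole hm le_rfl
    have h2 : 0 ≤ b k := by
      rw [hb_def, ← hs0]; exact sgnPow_mono hp (by linarith)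
    simp only [hC_def]; exact min_eq_right h2
  -- no a-value strictly between a j and a (j+1)
  have hnogap : ∀ {j j' : ℕ}, j < k → j' ≤ k → a j < a j' → a (j+1) ≤ a j' := by
    intro j j' hj hj'k h1
    have h2 : j < j' := hlt_idx (le_of_lt hj) hj'k h1
    exact hmole h2 hj'k
  -- positive part
  set m1 := max m mi with hm1_def
  have hm1k : m1 ≤ k := max_le hm hmi
  have ham1 : a m1 = max cstar xi := by
    rcases le_total m mi with hle | hle
    · rw [hm1_def, max_eq_right hle, hami, max_eq_right (by rw [← ham, ← hami]; exact hmole hle hmi)]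
    · rw [hm1_def, max_eq_left hle, ham, max_eq_left (by rw [← ham, ← hami]; exact hmole hle hm)]
  have hBm1 : B m1 = (if cstar ≤ xi then (xi - cstar) ^ p else 0) := by
    rcases le_total cstar xi with hcx | hcx
    · rw [if_pos hcx]
      have : a m1 = xi := by rw [ham1, max_eq_right hcx]
      simp only [hB_def, hb_def, this]
      rw [sgnPow_nonneg_eq (by linarith), max_eq_left (Real.rpow_nonneg (by linarith) p)]
    · rcases eq_or_lt_of_le hcx with rfl | hlt
      · -- xi = cstar
        rw [if_pos le_rfl]
        have hx : a m1 = xi := by rw [ham1, max_self]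
        simp only [hB_def, hb_def, hx, sub_self, hs0, max_self, Real.zero_rpow hpne]
      · rw [if_neg (not_le.mpr hlt)]
        have : a m1 = cstar := by rw [ham1, max_eq_left (le_of_lt hlt)]
        simp only [hB_def, hb_def, this, sub_self, hs0, max_self]
  -- positive-part termwise identification
  have hpos : ∑ j ∈ range k, (if cstar ≤ a j ∧ a j < xi
      then sgnPow p (a (j+1) - cstar) - sgnPow p (a j - cstar) else 0)
      = ∑ j ∈ range k, (if B j < B m1 then B (j+1) - B j else 0) := by
    apply Finset.sum_congr rfl
    intro j hj
    rw [Finset.mem_range] at hj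
    by_cases hcj : cstar ≤ a j
    · have hb1 : 0 ≤ b j := by rw [hb_def, ← hs0]; exact sgnPow_mono hp (by linarith)
      have hb2 : 0 ≤ b (j+1) := le_trans hb1 (hbmono j hj)
      have hBj : B j = b j := max_eq_left hb1
      have hBj1 : B (j+1) = b (j+1) := max_eq_left hb2
      rcases le_total cstar xi with hcx | hcx
      · have hBm1' : B m1 = sgnPow p (xi - cstar) := by
          rw [hBm1, if_pos hcx, sgnPow_nonneg_eq (by linarith)]
        have hiff : (B j < B m1) ↔ a j < xi := by
          rw [hBj, hBm1', hb_def]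
          rw [hsm.lt_iff_lt]
          constructor <;> intro hh <;> linarith
        by_cases hx : a j < xi
        · rw [if_pos ⟨hcj, hx⟩, if_pos (hiff.mpr hx), hBj, hBj1]
        · rw [if_neg (fun hc => hx hc.2), if_neg (fun hc => hx (hiff.mp hc))]
      · -- xi ≤ cstar : both sides zero
        have hnot : ¬ (a j < xi) := by intro hc; linarith
        rw [if_neg (fun hc => hnot hc.2)]
        have : ¬ (B j < B m1) := by
          rw [hBm1]
          rcases eq_or_lt_of_le hcx with rfl | hlt
          · rw [if_pos le_rfl, sub_self, Real.zero_rpow hpne]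
            exact not_lt.mpr (le_max_right _ _)
          · rw [if_neg (not_le.mpr hlt)]
            exact not_lt.mpr (le_max_right _ _)
        rw [if_neg this]
    · -- a j < cstar : both sides zero
      push_neg at hcj
      rw [if_neg (fun hc => absurd hc.1 (not_le.mpr hcj))]
      have hBj : B j = 0 := by
        apply max_eq_right
        rw [hb_def, ← hs0]
        exact sgnPow_mono hp (by linarith)
      by_cases hc1 : a (j+1) ≤ cstar
      · have hBj1 : B (j+1) = 0 := by
          apply max_eq_right
          rw [hb_def, ← hs0]
          exact sgnPow_mono hp (by linarith)
        split
        · rw [hBj, hBj1]; ring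
        · rfl
      · exfalso
        push_neg at hc1
        have := hnogap hj hm (ham ▸ hcj)
        rw [ham] at this
        linarith
  -- negative part
  set m2 := min m mi with hm2_def
  have hm2k : m2 ≤ k := le_trans (min_le_left _ _) hm
  have ham2 : a m2 = min cstar xi := by
    rcases le_total m mi with hle | hle
    · rw [hm2_def, min_eq_left hle, ham, min_eq_left (by rw [← ham, ← hami]; exact hmole hle hmi)]
    · rw [hm2_def, min_eq_right hle, hami, min_eq_right (by rw [← ham, ← hami]; exact hmole hle hm)]
  have hCm2 : Cc m2 = (if xi < cstar then -((cstar - xi) ^ p) else 0) := by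
    rcases lt_or_ge xi cstar with hlt | hle
    · rw [if_pos hlt]
      have : a m2 = xi := by rw [ham2, min_eq_right (le_of_lt hlt)]
      simp only [hC_def, hb_def, this]
      rw [sgnPow_neg_eq hpne (by linarith), show -(xi - cstar) = cstar - xi by ring]
      apply min_eq_left
      simp only [neg_nonpos]
      apply Real.rpow_nonneg; linarith
    · rw [if_neg (not_lt.mpr hle)]
      have : a m2 = cstar := by rw [ham2, min_eq_left hle]
      simp only [hC_def, hb_def, this, sub_self, hs0, min_self]
  have hneg : ∑ j ∈ range k, (if a j < cstar ∧ xi ≤ a j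
      then sgnPow p (a (j+1) - cstar) - sgnPow p (a j - cstar) else 0)
      = ∑ j ∈ range k, (if Cc m2 < Cc (j+1) then Cc (j+1) - Cc j else 0) := by
    apply Finset.sum_congr rfl
    intro j hj
    rw [Finset.mem_range] at hj
    by_cases hcj : a j < cstar
    · have hc1 : a (j+1) ≤ cstar := by
        by_contra hc1
        push_neg at hc1
        have := hnogap hj hm (ham ▸ hcj)
        rw [ham] at this
        linarith
      have hb1 : b j ≤ 0 := by rw [hb_def, ← hs0]; exact sgnPow_mono hp (by linarith)
      have hb2 : b (j+1) ≤ 0 := by rw [hb_def, ← hs0]; exact sgnPow_mono hp (by linarith)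
      have hCj : Cc j = b j := min_eq_left hb1
      have hCj1 : Cc (j+1) = b (j+1) := min_eq_left hb2
      rcases lt_or_ge xi cstar with hxc | hxc
      · have hCm2' : Cc m2 = sgnPow p (xi - cstar) := by
          rw [hCm2, if_pos hxc, sgnPow_neg_eq hpne (by linarith)]
          congr 1
          ring_nf
        have hiff : (Cc m2 < Cc (j+1)) ↔ xi ≤ a j := by
          rw [hCj1, hCm2', hb_def, hsm.lt_iff_lt]
          constructor
          · intro hh
            have hxlt : xi < a (j+1) := by linarith
            -- xi = a mi < a (j+1) so mi < j+1 so mi ≤ j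
            have h2 : mi < j + 1 := hlt_idx hmi (by omega) (by rw [hami]; exact hxlt)
            have h3 : a mi ≤ a j := hmole (by omega) (by omega)
            rw [hami] at h3; exact h3
          · intro hh
            have : a j < a (j+1) := hstrict j hj
            linarith
        by_cases hx : xi ≤ a j
        · rw [if_pos ⟨hcj, hx⟩, if_pos (hiff.mpr hx), hCj, hCj1]
        · rw [if_neg (fun hc => hx hc.2), if_neg (fun hc => hx (hiff.mp hc))]
      · -- cstar ≤ xi : both zero
        have hnot : ¬ (xi ≤ a j) := by intro hc; linarith
        rw [if_neg (fun hc => hnot hc.2)]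
        have : ¬ (Cc m2 < Cc (j+1)) := by
          rw [hCm2, if_neg (not_lt.mpr hxc), hCj1]
          exact not_lt.mpr hb2
        rw [if_neg this]
    · -- cstar ≤ a j : both zero
      push_neg at hcj
      rw [if_neg (fun hc => absurd hc.1 (not_lt.mpr hcj))]
      have hb1 : 0 ≤ b j := by rw [hb_def, ← hs0]; exact sgnPow_mono hp (by linarith)
      have hb2 : 0 ≤ b (j+1) := le_trans hb1 (hbmono j hj)
      have hCj : Cc j = 0 := min_eq_right hb1
      have hCj1 : Cc (j+1) = 0 := min_eq_right hb2
      split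
      · rw [hCj, hCj1]; ring
      · rfl
  rw [hpos, hneg, tele_lt k B hBmono m1 hm1k, tele_gt k Cc hCmono m2 hm2k, hB0, hCk, hBm1, hCm2]
  rcases lt_trichotomy xi cstar with hlt | rfl | hlt
  · rw [if_neg (not_le.mpr hlt), if_pos hlt, abs_of_neg (by linarith : xi - cstar < 0)]
    rw [show -(xi - cstar) = cstar - xi by ring]
    ring
  · simp only [if_pos le_rfl, lt_irrefl, if_false, sub_self, abs_zero]
    rw [Real.zero_rpow hpne]
    ring
  · rw [if_pos (le_of_lt hlt), if_neg (not_lt.mpr (le_of_lt hlt)),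
      abs_of_pos (by linarith : (0:ℝ) < xi - cstar)]
    ring


lemma lovasz_indicator {n : ℕ} (f : Finset (Fin n) → ℝ) (B : Finset (Fin n))
    (hB0 : B.Nonempty) (hBu : B ≠ Finset.univ) :
    lovaszExt f (fun i => if i ∈ B then (1:ℝ) else 0) = f B := by
  classical
  haveI : Nonempty (Fin n) := ⟨hB0.choose⟩
  obtain ⟨i1, hi1⟩ := hB0
  obtain ⟨i0, hi0⟩ : ∃ i, i ∉ B := by
    by_contra hc
    push_neg at hc
    exact hBu (Finset.eq_univ_iff_forall.mpr hc)
  set x : Fin n → ℝ := fun i => if i ∈ B then (1:ℝ) else 0 with hx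
  have hx01 : ∀ i, x i = 0 ∨ x i = 1 := by
    intro i; by_cases hi : i ∈ B <;> simp [hx, hi]
  have h0 : (0:ℝ) = ⨅ i, x i := by
    apply le_antisymm
    · apply le_ciInf; intro i
      rcases hx01 i with h | h <;> rw [h] <;> norm_num
    · have : x i0 = 0 := by simp [hx, hi0]
      exact this ▸ ciInf_le (Set.Finite.bddBelow (Set.finite_range x)) i0
  have h1 : (1:ℝ) = ⨆ i, x i := by
    apply le_antisymm
    · have : x i1 = 1 := by simp [hx, hi1]
      exact this ▸ le_ciSup (Set.Finite.bddAbove (Set.finite_range x)) i1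
    · apply ciSup_le; intro i
      rcases hx01 i with h | h <;> rw [h] <;> norm_num
  have := lovasz_closed f x 1 (fun j => if j = 0 then 0 else 1)
    (by intro j hj; interval_cases j; norm_num)
    (by simpa using h0) (by simpa using h1)
    (by
      intro i j hj; interval_cases j
      simp only [if_pos rfl, one_ne_zero, if_false]
      rcases hx01 i with h | h <;> rw [h] <;> push_neg <;> intro h' <;> simp at h' ⊢)
  rw [this]
  have hfil : (Finset.univ.filter fun i => (if (0:ℕ) = 0 then (0:ℝ) else 1) < x i) = B := by
    ext i
    simp only [if_pos rfl, Finset.mem_filter, Finset.mem_univ, true_and]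
    by_cases hi : i ∈ B <;> simp [hx, hi]
  rw [Finset.sum_range_one]
  norm_num
  rw [show (Finset.univ.filter fun i => (0:ℝ) < x i) = B from by
    ext i
    simp only [Finset.mem_filter, Finset.mem_univ, true_and]
    by_cases hi : i ∈ B <;> simp [hx, hi]]


/-- Cheeger inequalities for the eigenvalue `λ` of the Lovász
`p`-Laplacian built from the families `(f_e)` and modular `(g_e)`:
`λ ≤ (2C)^{p−1}·h`, and `h^p/p^p ≤ λ` under the extra degree condition. -/
theorem stmt_10 {n : ℕ} (E : Type) [Fintype E] [Nonempty E]
    (f g : E → Finset (Fin n) → ℝ) (p : ℝ) (hp : 1 ≤ p)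
    (hf0 : ∀ e, f e ∅ = 0) (hfV : ∀ e, f e Finset.univ = 0)
    (hfnn : ∀ e A, 0 ≤ f e A)
    (hgnn : ∀ e A, 0 ≤ g e A)
    (hgmod : ∀ e (A : Finset (Fin n)), g e A = ∑ i ∈ A, g e {i})
    (hgpos : ∀ i : Fin n, 0 < ∑ e, g e {i}) :
    let F : Finset (Fin n) → ℝ := fun A => ∑ e, f e A
    let Gf : Finset (Fin n) → ℝ := fun A => ∑ e, g e A
    let h : ℝ := sInf {r | ∃ A : Finset (Fin n), A ≠ ∅ ∧ A ≠ Finset.univ ∧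
        r = min (F A) (F Aᶜ) / min (Gf A) (Gf Aᶜ)}
    let lam : ℝ := sInf {r | ∃ x : Fin n → ℝ, (¬ ∀ i j, x i = x j) ∧
        r = (∑ e, lovaszExt (f e) x ^ p) /
          ⨅ c : ℝ, ∑ i, (∑ e, g e {i}) * |x i - c| ^ p}
    let C : ℝ := ⨆ e, ⨆ A : Finset (Fin n), f e A
    lam ≤ (2 * C) ^ (p - 1) * h ∧
      ((∀ e (i : Fin n), (∃ S : Finset (Fin n), f e (S.erase i) ≠ f e S) → 1 ≤ g e {i}) →
        h ^ p / p ^ p ≤ lam) := by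
  classical
  intro F Gf h lam C
  have hp0 : (0:ℝ) < p := lt_of_lt_of_le one_pos hp
  set d : Fin n → ℝ := fun i => ∑ e, g e {i} with hd_def
  have hd : ∀ i, 0 < d i := hgpos
  have hGf : ∀ A : Finset (Fin n), Gf A = ∑ i ∈ A, d i := by
    intro A
    simp only [Gf, hd_def]
    rw [Finset.sum_comm]
    exact Finset.sum_congr rfl fun e _ => (hgmod e A)
  have hFnn : ∀ A, 0 ≤ F A := fun A => Finset.sum_nonneg fun e _ => hfnn e A
  have hGfnn : ∀ A, 0 ≤ Gf A := fun A => Finset.sum_nonneg fun e _ => hgnn e A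
  have hF0 : F ∅ = 0 := by simp only [F]; exact Finset.sum_eq_zero fun e _ => hf0 e
  have hFV : F Finset.univ = 0 := by simp only [F]; exact Finset.sum_eq_zero fun e _ => hfV e
  have hh0 : 0 ≤ h := by
    apply Real.sInf_nonneg
    rintro r ⟨A, -, -, rfl⟩
    exact div_nonneg (le_min (hFnn A) (hFnn Aᶜ)) (le_min (hGfnn A) (hGfnn Aᶜ))
  have hfC : ∀ e A, f e A ≤ C := by
    intro e A
    have h1 : f e A ≤ ⨆ A : Finset (Fin n), f e A :=
      le_ciSup (Set.Finite.bddAbove (Set.finite_range _)) A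
    have h2 : (⨆ A : Finset (Fin n), f e A) ≤ ⨆ e, ⨆ A : Finset (Fin n), f e A :=
      le_ciSup (f := fun e => ⨆ A : Finset (Fin n), f e A)
        (Set.Finite.bddAbove (Set.finite_range _)) e
    exact le_trans h1 h2
  have hC0 : 0 ≤ C := le_trans (hfnn (Classical.arbitrary E) ∅) (hfC _ ∅)
  -- nonnegativity of the Lovász extension and of Rayleigh quotients
  have hlovnn : ∀ (e : E) (x : Fin n → ℝ), 0 ≤ lovaszExt (f e) x := by
    intro e x
    rcases isEmpty_or_nonempty (Fin n) with hE | hNE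
    · simp [lovaszExt, iInf_of_empty, iSup_of_empty]
    · apply intervalIntegral.integral_nonneg
      · obtain ⟨i0⟩ := hNE
        exact le_trans (ciInf_le (Set.Finite.bddBelow (Set.finite_range x)) i0)
          (le_ciSup (Set.Finite.bddAbove (Set.finite_range x)) i0)
      · intro u _; exact hfnn e _
  have hlamnn : ∀ r ∈ {r | ∃ x : Fin n → ℝ, (¬ ∀ i j, x i = x j) ∧
        r = (∑ e, lovaszExt (f e) x ^ p) /
          ⨅ c : ℝ, ∑ i, (∑ e, g e {i}) * |x i - c| ^ p}, 0 ≤ r := by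
    rintro r ⟨x, -, rfl⟩
    apply div_nonneg
    · exact Finset.sum_nonneg fun e _ => Real.rpow_nonneg (hlovnn e x) p
    · apply Real.iInf_nonneg
      intro c
      exact Finset.sum_nonneg fun i _ =>
        mul_nonneg (le_of_lt (hd i)) (Real.rpow_nonneg (abs_nonneg _) p)
  by_cases hn : n < 2
  · -- degenerate case
    haveI : Subsingleton (Fin n) := by
      rcases (by omega : n = 0 ∨ n = 1) with rfl | rfl
      · exact ⟨fun a => absurd a.2 (by omega)⟩
      · infer_instance
    have hhe : h = 0 := by
      have : {r | ∃ A : Finset (Fin n), A ≠ ∅ ∧ A ≠ Finset.univ ∧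
          r = min (F A) (F Aᶜ) / min (Gf A) (Gf Aᶜ)} = ∅ := by
        ext r
        simp only [Set.mem_setOf_eq, Set.mem_empty_iff_false, iff_false]
        rintro ⟨A, hA0, hAu, -⟩
        apply hAu
        apply Finset.eq_univ_of_card
        have h1 : A.Nonempty := Finset.nonempty_iff_ne_empty.mpr hA0
        have h2 : 1 ≤ A.card := Finset.card_pos.mpr h1
        have h3 : A.card ≤ Fintype.card (Fin n) := Finset.card_le_univ A
        have h4 : Fintype.card (Fin n) ≤ 1 := Fintype.card_le_one_iff_subsingleton.mpr ‹_›
        omega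
      rw [show h = sInf _ from rfl, this, Real.sInf_empty]
    have hle : lam = 0 := by
      have : {r | ∃ x : Fin n → ℝ, (¬ ∀ i j, x i = x j) ∧
          r = (∑ e, lovaszExt (f e) x ^ p) /
            ⨅ c : ℝ, ∑ i, (∑ e, g e {i}) * |x i - c| ^ p} = ∅ := by
        ext r
        simp only [Set.mem_setOf_eq, Set.mem_empty_iff_false, iff_false]
        rintro ⟨x, hx, -⟩
        exact hx fun i j => by rw [Subsingleton.elim i j]
      rw [show lam = sInf _ from rfl, this, Real.sInf_empty]
    rw [hhe, hle]
    constructor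
    · rw [mul_zero]
    · intro _
      rw [Real.zero_rpow (ne_of_gt hp0), zero_div]
  · push_neg at hn
    haveI : Nonempty (Fin n) := ⟨⟨0, by omega⟩⟩

    -- ====== common setup for n ≥ 2 ======
    have hlam_le : ∀ (x : Fin n → ℝ), (¬ ∀ i j, x i = x j) →
        lam ≤ (∑ e, lovaszExt (f e) x ^ p) /
          ⨅ c : ℝ, ∑ i, (∑ e, g e {i}) * |x i - c| ^ p := by
      intro x hx
      exact csInf_le ⟨0, fun r hr => hlamnn r hr⟩ ⟨x, hx, rfl⟩
    have hpowC : ∀ (e : E) (A : Finset (Fin n)), f e A ^ p ≤ C^(p-1) * f e A := by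
      intro e A
      rcases eq_or_lt_of_le (hfnn e A) with hz | hpos
      · rw [← hz, Real.zero_rpow (ne_of_gt hp0), mul_zero]
      · have h1 : f e A ^ p = f e A ^ (p-1) * f e A := by
          rw [← Real.rpow_add_one hpos.ne', sub_add_cancel]
        rw [h1]
        exact mul_le_mul_of_nonneg_right
          (Real.rpow_le_rpow (le_of_lt hpos) (hfC e A) (by linarith)) (le_of_lt hpos)
    -- minimizer of the Cheeger set
    have hsetfin : ({r | ∃ A : Finset (Fin n), A ≠ ∅ ∧ A ≠ Finset.univ ∧
        r = min (F A) (F Aᶜ) / min (Gf A) (Gf Aᶜ)}).Finite := by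
      apply Set.Finite.subset (Set.finite_range (fun A : Finset (Fin n) =>
        min (F A) (F Aᶜ) / min (Gf A) (Gf Aᶜ)))
      rintro r ⟨A, -, -, rfl⟩; exact ⟨A, rfl⟩
    have hA0ne : ({⟨0, by omega⟩} : Finset (Fin n)) ≠ ∅ := by simp
    have hA0nu : ({⟨0, by omega⟩} : Finset (Fin n)) ≠ Finset.univ := by
      intro hc
      have h2 : (⟨1, by omega⟩ : Fin n) ∈ ({⟨0, by omega⟩} : Finset (Fin n)) :=
        hc ▸ Finset.mem_univ _
      simp only [Finset.mem_singleton, Fin.mk.injEq] at h2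
      exact absurd h2 one_ne_zero
    have hsetne : Set.Nonempty {r | ∃ A : Finset (Fin n), A ≠ ∅ ∧ A ≠ Finset.univ ∧
        r = min (F A) (F Aᶜ) / min (Gf A) (Gf Aᶜ)} :=
      ⟨_, ⟨{⟨0, by omega⟩}, hA0ne, hA0nu, rfl⟩⟩
    have hle_hset : ∀ r ∈ {r | ∃ A : Finset (Fin n), A ≠ ∅ ∧ A ≠ Finset.univ ∧
        r = min (F A) (F Aᶜ) / min (Gf A) (Gf Aᶜ)}, h ≤ r := by
      intro r hr
      exact csInf_le ⟨0, fun r' hr' => by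
        obtain ⟨A, -, -, rfl⟩ := hr'
        exact div_nonneg (le_min (hFnn A) (hFnn Aᶜ)) (le_min (hGfnn A) (hGfnn Aᶜ))⟩ hr
    have hGfpos : ∀ A : Finset (Fin n), A.Nonempty → 0 < Gf A := by
      intro A hA
      rw [hGf A]
      exact Finset.sum_pos (fun i _ => hd i) hA
    have part1 : lam ≤ (2 * C) ^ (p - 1) * h := by
      obtain ⟨A, hA0, hAu, hAr⟩ := hsetne.csInf_mem hsetfin
      set B := if F A ≤ F Aᶜ then A else Aᶜ with hB_def
      have hBne : B.Nonempty := by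
        rw [hB_def]
        split
        · exact Finset.nonempty_iff_ne_empty.mpr hA0
        · exact Finset.nonempty_iff_ne_empty.mpr fun hc =>
            hAu (by rwa [Finset.compl_eq_empty_iff] at hc)
      have hBcne : Bᶜ.Nonempty := by
        rw [hB_def]
        split
        · exact Finset.nonempty_iff_ne_empty.mpr fun hc =>
            hAu (by rwa [Finset.compl_eq_empty_iff] at hc)
        · rw [compl_compl]
          exact Finset.nonempty_iff_ne_empty.mpr hA0
      have hBu : B ≠ Finset.univ := fun hc => by
        obtain ⟨i, hi⟩ := hBcne
        rw [Finset.mem_compl, hc] at hi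
        exact hi (Finset.mem_univ i)
      have hFB : F B = min (F A) (F Aᶜ) := by
        rw [hB_def]
        split <;> rename_i hFA
        · exact (min_eq_left hFA).symm
        · rw [min_eq_right (le_of_not_ge hFA)]
      have hGB : min (Gf B) (Gf Bᶜ) = min (Gf A) (Gf Aᶜ) := by
        rw [hB_def]
        split
        · rfl
        · rw [compl_compl, min_comm]
      set x : Fin n → ℝ := fun i => if i ∈ B then (1:ℝ) else 0 with hx_def
      have hxnc : ¬ ∀ i j, x i = x j := by
        intro hc
        obtain ⟨i1, hi1⟩ := hBne
        obtain ⟨i0, hi0⟩ := hBcne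
        rw [Finset.mem_compl] at hi0
        have := hc i1 i0
        rw [hx_def] at this
        simp only [if_pos hi1, if_neg hi0] at this
        norm_num at this
      have hnum : (∑ e, lovaszExt (f e) x ^ p) ≤ C^(p-1) * F B := by
        have heq : ∀ e : E, lovaszExt (f e) x = f e B :=
          fun e => lovasz_indicator (f e) B hBne hBu
        calc ∑ e, lovaszExt (f e) x ^ p = ∑ e, f e B ^ p := by
              apply Finset.sum_congr rfl; intro e _; rw [heq e]
          _ ≤ ∑ e, C^(p-1) * f e B := Finset.sum_le_sum (fun e _ => hpowC e B)
          _ = C^(p-1) * F B := by rw [← Finset.mul_sum]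
      set mG := min (Gf B) (Gf Bᶜ) with hmG_def
      have hmGpos : 0 < mG := lt_min (hGfpos B hBne) (hGfpos Bᶜ hBcne)
      have hDlb : 0 < (2:ℝ)^(1-p) * mG :=
        mul_pos (Real.rpow_pos_of_pos two_pos _) hmGpos
      have hden : ∀ c : ℝ, (2:ℝ)^(1-p) * mG ≤ ∑ i, (∑ e, g e {i}) * |x i - c| ^ p := by
        intro c
        have hsplit : ∑ i, (∑ e, g e {i}) * |x i - c| ^ p
            = Gf B * |1 - c|^p + Gf Bᶜ * |c|^p := by
          rw [← Finset.sum_add_sum_compl B]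
          congr 1
          · rw [hGf B, Finset.sum_mul]
            apply Finset.sum_congr rfl
            intro i hi
            rw [hx_def]
            simp only [if_pos hi]
            rfl
          · rw [hGf Bᶜ, Finset.sum_mul]
            apply Finset.sum_congr rfl
            intro i hi
            rw [Finset.mem_compl] at hi
            rw [hx_def]
            simp only [if_neg hi, zero_sub, abs_neg]
            rfl
        rw [hsplit]
        have h2pt : (2:ℝ)^(1-p) ≤ |1 - c|^p + |c|^p := by
          apply two_point_pow hp (abs_nonneg _) (abs_nonneg _)
          calc (1:ℝ) = |1 - c + c| := by norm_num
            _ ≤ |1 - c| + |c| := abs_add_le _ _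
        calc (2:ℝ)^(1-p) * mG ≤ (|1 - c|^p + |c|^p) * mG :=
              mul_le_mul_of_nonneg_right h2pt (le_of_lt hmGpos)
          _ = mG * |1 - c|^p + mG * |c|^p := by ring
          _ ≤ Gf B * |1 - c|^p + Gf Bᶜ * |c|^p := by
              apply add_le_add
              · exact mul_le_mul_of_nonneg_right (min_le_left _ _)
                  (Real.rpow_nonneg (abs_nonneg _) p)
              · exact mul_le_mul_of_nonneg_right (min_le_right _ _)
                  (Real.rpow_nonneg (abs_nonneg _) p)
      have hdenle : (2:ℝ)^(1-p) * mG ≤ ⨅ c : ℝ, ∑ i, (∑ e, g e {i}) * |x i - c| ^ p :=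
        le_ciInf hden
      have hNum0 : 0 ≤ ∑ e, lovaszExt (f e) x ^ p :=
        Finset.sum_nonneg fun e _ => Real.rpow_nonneg (hlovnn e x) p
      calc lam ≤ (∑ e, lovaszExt (f e) x ^ p) /
            ⨅ c : ℝ, ∑ i, (∑ e, g e {i}) * |x i - c| ^ p := hlam_le x hxnc
        _ ≤ (∑ e, lovaszExt (f e) x ^ p) / ((2:ℝ)^(1-p) * mG) :=
            div_le_div_of_nonneg_left hNum0 hDlb hdenle
        _ ≤ (C^(p-1) * F B) / ((2:ℝ)^(1-p) * mG) := by
            gcongr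
        _ = (2 * C) ^ (p - 1) * h := by
            have hh : h = min (F A) (F Aᶜ) / min (Gf A) (Gf Aᶜ) := hAr
            rw [hh, ← hFB, ← hGB]
            rw [Real.mul_rpow (by norm_num : (0:ℝ) ≤ 2) hC0]
            rw [← div_mul_div_comm]
            congr 1
            rw [show (1:ℝ) - p = -(p-1) by ring, Real.rpow_neg (by norm_num : (0:ℝ) ≤ 2)]
            rw [div_eq_mul_inv, inv_inv, mul_comm]

    have part2 : (∀ e (i : Fin n), (∃ S : Finset (Fin n), f e (S.erase i) ≠ f e S) → 1 ≤ g e {i}) →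
        h ^ p / p ^ p ≤ lam := by
      intro hdeg
      have hpne : p ≠ 0 := ne_of_gt hp0
      have hppow : (0:ℝ) < p ^ p := Real.rpow_pos_of_pos hp0 p
      have hlamne : Set.Nonempty {r | ∃ x : Fin n → ℝ, (¬ ∀ i j, x i = x j) ∧
          r = (∑ e, lovaszExt (f e) x ^ p) /
            ⨅ c : ℝ, ∑ i, (∑ e, g e {i}) * |x i - c| ^ p} := by
        refine ⟨_, ⟨fun i => if i ∈ ({⟨0, by omega⟩} : Finset (Fin n)) then (1:ℝ) else 0, ?_, rfl⟩⟩
        intro hc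
        have h2 := hc ⟨0, by omega⟩ ⟨1, by omega⟩
        norm_num [Fin.ext_iff] at h2
      apply le_csInf hlamne
      rintro r ⟨x, hnc, rfl⟩
      -- value partition
      obtain ⟨k, a, hstrict, ha0, hak, hvals, hofj⟩ := exists_partition x
      have hamono : ∀ j < k, a j ≤ a (j+1) := fun j hj => le_of_lt (hstrict j hj)
      have hmole : ∀ {i j : ℕ}, i ≤ j → j ≤ k → a i ≤ a j := fun hij hjk =>
        mono_of_step hamono hij hjk
      have hlt_idx : ∀ {i j : ℕ}, i ≤ k → j ≤ k → a i < a j → i < j := by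
        intro i j hik hjk hlt
        by_contra hc; push_neg at hc
        exact absurd (hmole hc hik) (not_le.mpr hlt)
      have hgap : ∀ i, ∀ j < k, ¬(a j < x i ∧ x i < a (j+1)) := by
        rintro i j hj ⟨h1, h2⟩
        obtain ⟨j', hj'k, hj'⟩ := hvals i
        rw [← hj'] at h1 h2
        have hA := hlt_idx (le_of_lt hj) hj'k h1
        have hB := hlt_idx hj'k hj h2
        omega
      set Sj : ℕ → Finset (Fin n) := fun j => Finset.univ.filter (fun i => a j < x i)
        with hSj_def
      have hclosed : ∀ e : E, lovaszExt (f e) x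
          = ∑ j ∈ Finset.range k, (a (j+1) - a j) * f e (Sj j) :=
        fun e => lovasz_closed (f e) x k a hamono ha0 hak hgap
      -- nonconstancy facts
      have hnc' : ∃ i j, x i ≠ x j := by push_neg at hnc; exact hnc
      obtain ⟨i1, j1, hij1⟩ := hnc'
      have hδ : a 0 < a k := by
        have hlo : ∀ i, a 0 ≤ x i := by
          intro i
          rw [ha0]; exact ciInf_le (Set.Finite.bddBelow (Set.finite_range x)) i
        have hhi : ∀ i, x i ≤ a k := by
          intro i
          rw [hak]; exact le_ciSup (Set.Finite.bddAbove (Set.finite_range x)) i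
        rcases lt_or_gt_of_ne hij1 with hlt | hlt
        · exact lt_of_le_of_lt (hlo i1) (lt_of_lt_of_le hlt (hhi j1))
        · exact lt_of_le_of_lt (hlo j1) (lt_of_lt_of_le hlt (hhi i1))
      -- proper level sets
      have hSjne : ∀ j < k, (Sj j).Nonempty := by
        intro j hj
        obtain ⟨iM, hiM⟩ := hofj k le_rfl
        refine ⟨iM, Finset.mem_filter.mpr ⟨Finset.mem_univ _, ?_⟩⟩
        rw [← hiM]
        exact lt_of_lt_of_le (hstrict j hj) (hmole hj le_rfl)
      have hSjnu : ∀ j < k, (Sj j)ᶜ.Nonempty := by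
        intro j hj
        obtain ⟨im, him⟩ := hofj 0 (Nat.zero_le k)
        refine ⟨im, Finset.mem_compl.mpr ?_⟩
        simp only [hSj_def, Finset.mem_filter, Finset.mem_univ, true_and]
        rw [← him]
        exact not_lt.mpr (hmole (Nat.zero_le j) (le_of_lt hj))
      -- weights
      set W := ∑ i, d i with hW_def
      have hWpos : 0 < W := Finset.sum_pos (fun i _ => hd i) Finset.univ_nonempty
      have hGfSc : ∀ (A : Finset (Fin n)), Gf Aᶜ = W - Gf A := by
        intro A
        rw [hGf, hGf, hW_def]
        have := Finset.sum_add_sum_compl A d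
        linarith
      -- median
      set Tf := (Finset.image x Finset.univ).filter
        (fun v => Gf (Finset.univ.filter (fun i => v < x i)) ≤ W/2) with hTf_def
      have hGfe : Gf ∅ = 0 := by rw [hGf]; simp
      have hTfne : Tf.Nonempty := by
        obtain ⟨iM, hiM⟩ := hofj k le_rfl
        refine ⟨x iM, Finset.mem_filter.mpr
          ⟨Finset.mem_image_of_mem x (Finset.mem_univ _), ?_⟩⟩
        have hfe : Finset.univ.filter (fun i => x iM < x i) = ∅ := by
          rw [Finset.filter_eq_empty_iff]
          intro i _
          rw [← hiM, not_lt, hak]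
          exact le_ciSup (Set.Finite.bddAbove (Set.finite_range x)) i
        rw [hfe, hGfe]
        linarith
      set cstar := Tf.min' hTfne with hcstar_def
      have hcT : cstar ∈ Tf := Tf.min'_mem hTfne
      have hmed1 : Gf (Finset.univ.filter (fun i => cstar < x i)) ≤ W/2 :=
        (Finset.mem_filter.mp hcT).2
      obtain ⟨m, hmk, ham⟩ : ∃ m ≤ k, a m = cstar := by
        obtain ⟨i, -, hi⟩ := Finset.mem_image.mp (Finset.mem_filter.mp hcT).1
        obtain ⟨j, hjk, hj⟩ := hvals i
        exact ⟨j, hjk, by rw [hj, hi]⟩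
      have hmed2 : Gf (Finset.univ.filter (fun i => x i < cstar)) ≤ W/2 := by
        by_cases hne : ((Finset.image x Finset.univ).filter (· < cstar)).Nonempty
        · set v' := ((Finset.image x Finset.univ).filter (· < cstar)).max' hne with hv'_def
          have hv'mem := Finset.max'_mem _ hne
          have hv'c : v' < cstar := (Finset.mem_filter.mp hv'mem).2
          have hv'img : v' ∈ Finset.image x Finset.univ := (Finset.mem_filter.mp hv'mem).1
          have hv'not : ¬ (Gf (Finset.univ.filter (fun i => v' < x i)) ≤ W/2) := by
            intro hcon
            have hmemTf : v' ∈ Tf := Finset.mem_filter.mpr ⟨hv'img, hcon⟩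
            exact absurd (Tf.min'_le v' hmemTf) (not_le.mpr hv'c)
          push_neg at hv'not
          have hseteq : Finset.univ.filter (fun i => x i < cstar)
              = (Finset.univ.filter (fun i => v' < x i))ᶜ := by
            ext i
            simp only [Finset.mem_filter, Finset.mem_univ, true_and, Finset.mem_compl,
              not_lt]
            constructor
            · intro hlt
              have hmem2 : x i ∈ (Finset.image x Finset.univ).filter (· < cstar) :=
                Finset.mem_filter.mpr ⟨Finset.mem_image_of_mem x (Finset.mem_univ _), hlt⟩
              exact Finset.le_max' _ _ hmem2
            · intro hle
              exact lt_of_le_of_lt hle hv'c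
          rw [hseteq, hGfSc]
          linarith
        · rw [Finset.not_nonempty_iff_eq_empty] at hne
          have hfe : Finset.univ.filter (fun i => x i < cstar) = ∅ := by
            rw [Finset.filter_eq_empty_iff]
            intro i _
            intro hlt
            have : x i ∈ (Finset.image x Finset.univ).filter (· < cstar) :=
              Finset.mem_filter.mpr ⟨Finset.mem_image_of_mem x (Finset.mem_univ _), hlt⟩
            rw [hne] at this
            exact absurd this (Finset.notMem_empty _)
          rw [hfe, hGfe]
          linarith
      -- transformed vector
      set b : ℕ → ℝ := fun j => sgnPow p (a j - cstar) with hb_def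
      set z : Fin n → ℝ := fun i => sgnPow p (x i - cstar) with hz_def
      have hbmono : ∀ j < k, b j ≤ b (j+1) := fun j hj =>
        sgnPow_mono hp (by linarith [hstrict j hj])
      have hzclosed : ∀ e : E, lovaszExt (f e) z
          = ∑ j ∈ Finset.range k, (b (j+1) - b j) * f e (Sj j) := by
        intro e
        obtain ⟨i0, hi0⟩ := hofj 0 (Nat.zero_le k)
        obtain ⟨iK, hiK⟩ := hofj k le_rfl
        have hxmin : ∀ i, x i0 ≤ x i := by
          intro i
          rw [← hi0, ha0]
          exact ciInf_le (Set.Finite.bddBelow (Set.finite_range x)) i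
        have hxmax : ∀ i, x i ≤ x iK := by
          intro i
          rw [← hiK, hak]
          exact le_ciSup (Set.Finite.bddAbove (Set.finite_range x)) i
        have h0' : b 0 = ⨅ i, z i := by
          apply le_antisymm
          · apply le_ciInf
            intro i
            simp only [hb_def, hz_def, hi0]
            exact sgnPow_mono hp (by linarith [hxmin i])
          · have hzb : z i0 = b 0 := by simp only [hz_def, hb_def, hi0]
            rw [← hzb]
            exact ciInf_le (Set.Finite.bddBelow (Set.finite_range z)) i0
        have hk' : b k = ⨆ i, z i := by
          apply le_antisymm
          · have hzb : z iK = b k := by simp only [hz_def, hb_def, hiK]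
            rw [← hzb]
            exact le_ciSup (Set.Finite.bddAbove (Set.finite_range z)) iK
          · apply ciSup_le
            intro i
            simp only [hb_def, hz_def, hiK]
            exact sgnPow_mono hp (by linarith [hxmax i])
        have hgap' : ∀ i, ∀ j < k, ¬(b j < z i ∧ z i < b (j+1)) := by
          rintro i j hj ⟨h1, h2⟩
          simp only [hb_def, hz_def] at h1 h2
          have h1' := (sgnPow_strictMono hp).lt_iff_lt.mp h1
          have h2' := (sgnPow_strictMono hp).lt_iff_lt.mp h2
          exact hgap i j hj ⟨by linarith, by linarith⟩
        have hcz := lovasz_closed (f e) z k b hbmono h0' hk' hgap'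
        rw [hcz]
        apply Finset.sum_congr rfl
        intro j hj
        have hfeq : (Finset.univ.filter fun i => b j < z i) = Sj j := by
          ext i
          simp only [Finset.mem_filter, Finset.mem_univ, true_and, hSj_def, hb_def, hz_def]
          rw [(sgnPow_strictMono hp).lt_iff_lt]
          constructor <;> intro hh <;> linarith
        rw [hfeq]
      -- support sets
      set supp : E → Finset (Fin n) := fun e =>
        Finset.univ.filter (fun i => ∃ S : Finset (Fin n), f e (S.erase i) ≠ f e S)
        with hsupp_def
      have hsupp_red : ∀ (e : E) (S : Finset (Fin n)), f e (S ∩ supp e) = f e S := by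
        intro e
        apply supp_reduce
        intro i hi S
        by_contra hne
        apply hi
        simp only [hsupp_def, Finset.mem_filter, Finset.mem_univ, true_and]
        exact ⟨S, hne⟩
      have hsupp_zero : ∀ (e : E) (S : Finset (Fin n)), S ∩ supp e = ∅ → f e S = 0 := by
        intro e S hS
        rw [← hsupp_red e S, hS]
        exact hf0 e
      have hsupp_univ : ∀ (e : E) (S : Finset (Fin n)), supp e ⊆ S → f e S = 0 := by
        intro e S hS
        have h1 : S ∩ supp e = supp e := Finset.inter_eq_right.mpr hS
        have h2 : (Finset.univ : Finset (Fin n)) ∩ supp e = supp e :=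
          Finset.inter_eq_right.mpr (Finset.subset_univ _)
        rw [← hsupp_red e S, h1, ← h2, hsupp_red e Finset.univ]
        exact hfV e
      set Be : E → ℝ := fun e => ∑ i ∈ supp e, |x i - cstar| ^ p with hBe_def
      have hBe_nn : ∀ e, 0 ≤ Be e := fun e =>
        Finset.sum_nonneg fun i _ => Real.rpow_nonneg (abs_nonneg _) p
      set D := ∑ i, d i * |x i - cstar| ^ p with hD_def
      have hDpos : 0 < D := by
        have hone : x i1 ≠ cstar ∨ x j1 ≠ cstar := by
          by_contra hc; push_neg at hc
          exact hij1 (hc.1.trans hc.2.symm)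
        have hkey : ∀ i0 : Fin n, x i0 ≠ cstar → 0 < D := by
          intro i0 hx0
          have hterm : 0 < d i0 * |x i0 - cstar| ^ p :=
            mul_pos (hd i0)
              (Real.rpow_pos_of_pos (abs_pos.mpr (sub_ne_zero.mpr hx0)) p)
          rw [hD_def]
          exact lt_of_lt_of_le hterm (Finset.single_le_sum
            (f := fun i => d i * |x i - cstar| ^ p)
            (fun i _ => mul_nonneg (le_of_lt (hd i)) (Real.rpow_nonneg (abs_nonneg _) _))
            (Finset.mem_univ i0))
        exact hone.elim (hkey i1) (hkey j1)
      have hNum_nn : 0 ≤ ∑ e, lovaszExt (f e) x ^ p :=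
        Finset.sum_nonneg fun e _ => Real.rpow_nonneg (hlovnn e x) p
      -- upper bound per e
      have hup : ∀ e : E, lovaszExt (f e) z
          ≤ p * Be e ^ ((p-1)/p) * lovaszExt (f e) x := by
        intro e
        rw [hzclosed e, hclosed e, Finset.mul_sum]
        apply Finset.sum_le_sum
        intro j hj
        rw [Finset.mem_range] at hj
        by_cases hfz : f e (Sj j) = 0
        · rw [hfz]; simp
        · have hi1 : ∃ i1', i1' ∈ Sj j ∧ i1' ∈ supp e := by
            by_contra hc; push_neg at hc
            apply hfz
            apply hsupp_zero
            rw [Finset.eq_empty_iff_forall_notMem]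
            intro i hi
            rw [Finset.mem_inter] at hi
            exact hc i hi.1 hi.2
          have hi2 : ∃ i2', i2' ∈ supp e ∧ i2' ∉ Sj j := by
            by_contra hc; push_neg at hc
            exact hfz (hsupp_univ e (Sj j) hc)
          obtain ⟨ia, hiaS, hias⟩ := hi1
          obtain ⟨ib, hibs, hibS⟩ := hi2
          have hx1 : a j < x ia := (Finset.mem_filter.mp hiaS).2
          have hx2 : x ib ≤ a j := by
            by_contra hc; push_neg at hc
            exact hibS (Finset.mem_filter.mpr ⟨Finset.mem_univ _, hc⟩)
          have hx1' : a (j+1) ≤ x ia := by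
            by_contra hc; push_neg at hc
            exact hgap ia j hj ⟨hx1, hc⟩
          have habs : ∀ i0 ∈ supp e, |x i0 - cstar| ≤ Be e ^ (1/p) := by
            intro i0 hi0
            have h1 : |x i0 - cstar| ^ p ≤ Be e :=
              Finset.single_le_sum (f := fun i => |x i - cstar| ^ p)
                (fun i _ => Real.rpow_nonneg (abs_nonneg _) p) hi0
            calc |x i0 - cstar| = (|x i0 - cstar| ^ p) ^ (1/p) := by
                  rw [← Real.rpow_mul (abs_nonneg _), mul_one_div, div_self hpne,
                    Real.rpow_one]
              _ ≤ Be e ^ (1/p) :=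
                  Real.rpow_le_rpow (Real.rpow_nonneg (abs_nonneg _) p) h1
                    (by positivity)
          have hMa := habs ia hias
          have hMb := habs ib hibs
          have hwj : ∀ jj : ℕ, x ib ≤ a jj → a jj ≤ x ia →
              |a jj - cstar| ≤ Be e ^ (1/p) := by
            intro jj hlo hhi
            rw [abs_le] at hMa hMb ⊢
            constructor <;> [linarith [hMb.1]; linarith [hMa.2]]
          have hj1 : |a j - cstar| ≤ Be e ^ (1/p) :=
            hwj j hx2 (by linarith [hamono j hj])
          have hj2 : |a (j+1) - cstar| ≤ Be e ^ (1/p) :=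
            hwj (j+1) (by linarith [hamono j hj]) (by linarith)
          have hmvt := sgnPow_diff_le hp
            (by linarith [hamono j hj] : a j - cstar ≤ a (j+1) - cstar) hj1 hj2
          have hexp : (Be e ^ (1/p)) ^ (p-1) = Be e ^ ((p-1)/p) := by
            rw [← Real.rpow_mul (hBe_nn e)]
            congr 1
            field_simp
          calc (b (j+1) - b j) * f e (Sj j)
              ≤ (p * Be e ^ ((p-1)/p) * (a (j+1) - a j)) * f e (Sj j) := by
                apply mul_le_mul_of_nonneg_right _ (hfnn e _)
                have hr : p * (Be e ^ (1/p)) ^ (p-1) * ((a (j+1) - cstar) - (a j - cstar))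
                    = p * Be e ^ ((p-1)/p) * (a (j+1) - a j) := by
                  rw [hexp]; ring
                simp only [hb_def]
                rw [← hr]
                exact hmvt
            _ = p * Be e ^ ((p-1)/p) * ((a (j+1) - a j) * f e (Sj j)) := by ring
      -- lower bound
      have hstepB : ∀ j < k,
          h * (if cstar ≤ a j then Gf (Sj j) else W - Gf (Sj j)) ≤ F (Sj j) := by
        intro j hj
        have hne1 := hSjne j hj
        have hne2 := hSjnu j hj
        have hproper1 : Sj j ≠ ∅ := Finset.nonempty_iff_ne_empty.mp hne1
        have hproper2 : Sj j ≠ Finset.univ := by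
          intro hc
          obtain ⟨i, hi⟩ := hne2
          rw [Finset.mem_compl, hc] at hi
          exact hi (Finset.mem_univ i)
        have hh_le := hle_hset _ ⟨Sj j, hproper1, hproper2, rfl⟩
        have hGpos1 : 0 < Gf (Sj j) := hGfpos _ hne1
        have hGpos2 : 0 < Gf (Sj j)ᶜ := hGfpos _ hne2
        have hminpos : 0 < min (Gf (Sj j)) (Gf (Sj j)ᶜ) := lt_min hGpos1 hGpos2
        have hmul : h * min (Gf (Sj j)) (Gf (Sj j)ᶜ) ≤ min (F (Sj j)) (F (Sj j)ᶜ) :=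
          (le_div_iff₀ hminpos).mp hh_le
        have hμ : (if cstar ≤ a j then Gf (Sj j) else W - Gf (Sj j))
            ≤ min (Gf (Sj j)) (Gf (Sj j)ᶜ) := by
          split <;> rename_i hcj
          · have hsub : Sj j ⊆ Finset.univ.filter (fun i => cstar < x i) := by
              intro i hi
              rw [Finset.mem_filter] at hi ⊢
              exact ⟨hi.1, lt_of_le_of_lt hcj hi.2⟩
            have h1 : Gf (Sj j) ≤ Gf (Finset.univ.filter (fun i => cstar < x i)) := by
              rw [hGf, hGf]
              exact Finset.sum_le_sum_of_subset_of_nonneg hsub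
                (fun i _ _ => le_of_lt (hd i))
            have h2 : Gf (Sj j) ≤ W/2 := le_trans h1 hmed1
            apply le_min le_rfl
            rw [hGfSc]
            linarith
          · push_neg at hcj
            have hsub : (Sj j)ᶜ ⊆ Finset.univ.filter (fun i => x i < cstar) := by
              intro i hi
              rw [Finset.mem_compl, hSj_def, Finset.mem_filter, not_and] at hi
              rw [Finset.mem_filter]
              refine ⟨Finset.mem_univ _, ?_⟩
              have := hi (Finset.mem_univ i)
              push_neg at this
              linarith
            have h1 : Gf (Sj j)ᶜ ≤ Gf (Finset.univ.filter (fun i => x i < cstar)) := by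
              rw [hGf, hGf]
              exact Finset.sum_le_sum_of_subset_of_nonneg hsub
                (fun i _ _ => le_of_lt (hd i))
            have h2 : Gf (Sj j)ᶜ ≤ W/2 := le_trans h1 hmed2
            rw [← hGfSc]
            apply le_min ?_ le_rfl
            have h3 := hGfSc (Sj j)
            linarith
        calc h * (if cstar ≤ a j then Gf (Sj j) else W - Gf (Sj j))
            ≤ h * min (Gf (Sj j)) (Gf (Sj j)ᶜ) := mul_le_mul_of_nonneg_left hμ hh0
          _ ≤ min (F (Sj j)) (F (Sj j)ᶜ) := hmul
          _ ≤ F (Sj j) := min_le_left _ _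
      have hstepC : ∑ j ∈ Finset.range k,
          (b (j+1) - b j) * (if cstar ≤ a j then Gf (Sj j) else W - Gf (Sj j)) = D := by
        have hterm : ∀ j ∈ Finset.range k,
            (b (j+1) - b j) * (if cstar ≤ a j then Gf (Sj j) else W - Gf (Sj j))
            = ∑ i, (d i * (if cstar ≤ a j ∧ a j < x i then b (j+1) - b j else 0)
                 + d i * (if a j < cstar ∧ x i ≤ a j then b (j+1) - b j else 0)) := by
          intro j hj
          have hGS : Gf (Sj j) = ∑ i, (if a j < x i then d i else 0) := by
            rw [hGf]
            simp only [hSj_def]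
            exact Finset.sum_filter _ _
          have hWS : W - Gf (Sj j) = ∑ i, (if a j < x i then 0 else d i) := by
            rw [hGS, hW_def, ← Finset.sum_sub_distrib]
            apply Finset.sum_congr rfl
            intro i _
            by_cases hx : a j < x i
            · rw [if_pos hx, if_pos hx]; ring
            · rw [if_neg hx, if_neg hx]; ring
          by_cases hcj : cstar ≤ a j
          · rw [if_pos hcj, hGS, Finset.mul_sum]
            apply Finset.sum_congr rfl
            intro i _
            by_cases hx : a j < x i
            · rw [if_pos hx, if_pos (And.intro hcj hx),
                if_neg (fun hc => absurd hcj (not_le.mpr hc.1))]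
              ring
            · rw [if_neg hx, if_neg (fun hc => hx hc.2),
                if_neg (fun hc => absurd hcj (not_le.mpr hc.1))]
              ring
          · rw [if_neg hcj, hWS, Finset.mul_sum]
            push_neg at hcj
            apply Finset.sum_congr rfl
            intro i _
            by_cases hx : a j < x i
            · rw [if_pos hx, if_neg (fun hc => absurd hc.1 (not_le.mpr hcj)),
                if_neg (fun hc => absurd hx (not_lt.mpr hc.2))]
              ring
            · rw [if_neg hx, if_neg (fun hc => absurd hc.1 (not_le.mpr hcj)),
                if_pos (And.intro hcj (not_lt.mp hx))]
              ring
        rw [Finset.sum_congr rfl hterm, Finset.sum_comm, hD_def]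
        apply Finset.sum_congr rfl
        intro i _
        rw [Finset.sum_add_distrib, ← Finset.mul_sum, ← Finset.mul_sum, ← mul_add]
        congr 1
        obtain ⟨mi, hmik, hami⟩ := hvals i
        have hks := key_sum hp hstrict hmk hmik ham hami
        simp only [hb_def]
        exact hks
      have hlow : h * D ≤ ∑ e, lovaszExt (f e) z := by
        calc h * D
            = ∑ j ∈ Finset.range k, h * ((b (j+1) - b j)
                * (if cstar ≤ a j then Gf (Sj j) else W - Gf (Sj j))) := by
              rw [← Finset.mul_sum, hstepC]
          _ ≤ ∑ j ∈ Finset.range k, (b (j+1) - b j) * F (Sj j) := by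
              apply Finset.sum_le_sum
              intro j hj
              rw [Finset.mem_range] at hj
              have hbj : 0 ≤ b (j+1) - b j := by linarith [hbmono j hj]
              calc h * ((b (j+1) - b j)
                  * (if cstar ≤ a j then Gf (Sj j) else W - Gf (Sj j)))
                  = (b (j+1) - b j)
                    * (h * (if cstar ≤ a j then Gf (Sj j) else W - Gf (Sj j))) := by ring
                _ ≤ (b (j+1) - b j) * F (Sj j) :=
                    mul_le_mul_of_nonneg_left (hstepB j hj) hbj
          _ = ∑ e, lovaszExt (f e) z := by
              have hFs : ∀ j ∈ Finset.range k, (b (j+1) - b j) * F (Sj j)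
                  = ∑ e, (b (j+1) - b j) * f e (Sj j) := by
                intro j _
                rw [← Finset.mul_sum]
              rw [Finset.sum_congr rfl hFs, Finset.sum_comm]
              apply Finset.sum_congr rfl
              intro e _
              rw [hzclosed e]
      -- sum of Be bounded by D
      have hBeD : (∑ e, Be e) ≤ D := by
        have h1 : ∀ e : E, Be e ≤ ∑ i, g e {i} * |x i - cstar| ^ p := by
          intro e
          simp only [hBe_def]
          calc ∑ i ∈ supp e, |x i - cstar| ^ p
              ≤ ∑ i ∈ supp e, g e {i} * |x i - cstar| ^ p := by
                apply Finset.sum_le_sum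
                intro i hi
                have hg1 : 1 ≤ g e {i} := by
                  apply hdeg e i
                  simp only [hsupp_def, Finset.mem_filter] at hi
                  exact hi.2
                exact le_mul_of_one_le_left (Real.rpow_nonneg (abs_nonneg _) p) hg1
            _ ≤ ∑ i, g e {i} * |x i - cstar| ^ p :=
                Finset.sum_le_sum_of_subset_of_nonneg (Finset.subset_univ _)
                  (fun i _ _ => mul_nonneg (hgnn e _) (Real.rpow_nonneg (abs_nonneg _) _))
        calc ∑ e, Be e ≤ ∑ e, ∑ i, g e {i} * |x i - cstar| ^ p :=
              Finset.sum_le_sum (fun e _ => h1 e)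
          _ = D := by
              rw [hD_def, Finset.sum_comm]
              apply Finset.sum_congr rfl
              intro i _
              rw [← Finset.sum_mul]
      -- Hölder
      have hhold : ∑ e, Be e ^ ((p-1)/p) * lovaszExt (f e) x
          ≤ (∑ e, Be e) ^ ((p-1)/p) * (∑ e, lovaszExt (f e) x ^ p) ^ (1/p) :=
        holder_wrap hp Be (fun e => lovaszExt (f e) x) hBe_nn (fun e => hlovnn e x)
      -- main estimate
      have hmain : h * D
          ≤ p * (D ^ ((p-1)/p) * (∑ e, lovaszExt (f e) x ^ p) ^ (1/p)) := by
        have hqnn : (0:ℝ) ≤ (p-1)/p := div_nonneg (by linarith) (le_of_lt hp0)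
        calc h * D ≤ ∑ e, lovaszExt (f e) z := hlow
          _ ≤ ∑ e, p * Be e ^ ((p-1)/p) * lovaszExt (f e) x :=
              Finset.sum_le_sum (fun e _ => hup e)
          _ = p * ∑ e, Be e ^ ((p-1)/p) * lovaszExt (f e) x := by
              rw [Finset.mul_sum]
              apply Finset.sum_congr rfl
              intro e _
              ring
          _ ≤ p * ((∑ e, Be e) ^ ((p-1)/p) * (∑ e, lovaszExt (f e) x ^ p) ^ (1/p)) :=
              mul_le_mul_of_nonneg_left hhold (le_of_lt hp0)
          _ ≤ p * (D ^ ((p-1)/p) * (∑ e, lovaszExt (f e) x ^ p) ^ (1/p)) := by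
              apply mul_le_mul_of_nonneg_left _ (le_of_lt hp0)
              apply mul_le_mul_of_nonneg_right
                (Real.rpow_le_rpow (Finset.sum_nonneg fun e _ => hBe_nn e) hBeD hqnn)
                (Real.rpow_nonneg hNum_nn _)
      -- cancellation
      have hcancel : h * D ^ (1/p)
          ≤ p * (∑ e, lovaszExt (f e) x ^ p) ^ (1/p) := by
        have hsplit : D = D ^ ((p-1)/p) * D ^ (1/p) := by
          rw [← Real.rpow_add hDpos, ← add_div, sub_add_cancel, div_self hpne,
            Real.rpow_one]
        have hq : 0 < D ^ ((p-1)/p) := Real.rpow_pos_of_pos hDpos _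
        have h2 : (h * D ^ (1/p)) * D ^ ((p-1)/p)
            ≤ (p * (∑ e, lovaszExt (f e) x ^ p) ^ (1/p)) * D ^ ((p-1)/p) := by
          calc (h * D ^ (1/p)) * D ^ ((p-1)/p)
              = h * (D ^ ((p-1)/p) * D ^ (1/p)) := by ring
            _ = h * D := by rw [← hsplit]
            _ ≤ p * (D ^ ((p-1)/p) * (∑ e, lovaszExt (f e) x ^ p) ^ (1/p)) := hmain
            _ = (p * (∑ e, lovaszExt (f e) x ^ p) ^ (1/p)) * D ^ ((p-1)/p) := by ring
        exact le_of_mul_le_mul_right h2 hq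
      have hpow2 : h ^ p * D ≤ p ^ p * (∑ e, lovaszExt (f e) x ^ p) := by
        have h1 : 0 ≤ h * D ^ (1/p) :=
          mul_nonneg hh0 (Real.rpow_nonneg (le_of_lt hDpos) _)
        have h2 := Real.rpow_le_rpow h1 hcancel (le_of_lt hp0)
        rw [Real.mul_rpow hh0 (Real.rpow_nonneg (le_of_lt hDpos) _),
          Real.mul_rpow (le_of_lt hp0) (Real.rpow_nonneg hNum_nn _),
          ← Real.rpow_mul (le_of_lt hDpos), ← Real.rpow_mul hNum_nn,
          one_div_mul_cancel hpne, Real.rpow_one, Real.rpow_one] at h2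
        exact h2
      -- denominator facts
      have hbdd : BddBelow (Set.range fun c : ℝ =>
          ∑ i, (∑ e, g e {i}) * |x i - c| ^ p) := by
        refine ⟨0, ?_⟩
        rintro y ⟨c, rfl⟩
        exact Finset.sum_nonneg fun i _ =>
          mul_nonneg (le_of_lt (hd i)) (Real.rpow_nonneg (abs_nonneg _) p)
      have hDen_le : (⨅ c : ℝ, ∑ i, (∑ e, g e {i}) * |x i - c| ^ p) ≤ D := by
        have hle := ciInf_le hbdd cstar
        exact hle
      have hDen_pos : 0 < ⨅ c : ℝ, ∑ i, (∑ e, g e {i}) * |x i - c| ^ p := by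
        obtain ⟨iM, hiM⟩ := hofj k le_rfl
        obtain ⟨im, him⟩ := hofj 0 (Nat.zero_le k)
        have hδ2 : (0:ℝ) < (a k - a 0)/2 := by linarith
        have hlb : 0 < min (d iM) (d im) * ((a k - a 0)/2) ^ p :=
          mul_pos (lt_min (hd iM) (hd im)) (Real.rpow_pos_of_pos hδ2 p)
        apply lt_of_lt_of_le hlb
        apply le_ciInf
        intro c
        have hone : (a k - a 0)/2 ≤ |x iM - c| ∨ (a k - a 0)/2 ≤ |x im - c| := by
          by_contra hcon
          push_neg at hcon
          have h1 : |x iM - x im| ≤ |x iM - c| + |x im - c| := by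
            calc |x iM - x im| = |(x iM - c) + (c - x im)| := by ring_nf
              _ ≤ |x iM - c| + |c - x im| := abs_add_le _ _
              _ = |x iM - c| + |x im - c| := by rw [abs_sub_comm c]
          have h2 : x iM - x im = a k - a 0 := by rw [← hiM, ← him]
          rw [show x iM - x im = a k - a 0 from by rw [← hiM, ← him],
            abs_of_pos (by linarith : (0:ℝ) < a k - a 0)] at h1
          linarith [hcon.1, hcon.2]
        rcases hone with hone1 | hone1
        · have hterm : min (d iM) (d im) * ((a k - a 0)/2) ^ p
              ≤ d iM * |x iM - c| ^ p :=
            mul_le_mul (min_le_left _ _)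
              (Real.rpow_le_rpow (le_of_lt hδ2) hone1 (le_of_lt hp0))
              (Real.rpow_nonneg (le_of_lt hδ2) p) (le_of_lt (hd iM))
          apply le_trans hterm
          exact Finset.single_le_sum (f := fun i => d i * |x i - c| ^ p) (fun i _ =>
            mul_nonneg (le_of_lt (hd i)) (Real.rpow_nonneg (abs_nonneg _) _))
            (Finset.mem_univ iM)
        · have hterm : min (d iM) (d im) * ((a k - a 0)/2) ^ p
              ≤ d im * |x im - c| ^ p :=
            mul_le_mul (min_le_right _ _)
              (Real.rpow_le_rpow (le_of_lt hδ2) hone1 (le_of_lt hp0))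
              (Real.rpow_nonneg (le_of_lt hδ2) p) (le_of_lt (hd im))
          apply le_trans hterm
          exact Finset.single_le_sum (f := fun i => d i * |x i - c| ^ p) (fun i _ =>
            mul_nonneg (le_of_lt (hd i)) (Real.rpow_nonneg (abs_nonneg _) _))
            (Finset.mem_univ im)
      -- finish
      have hfin : h ^ p / p ^ p ≤ (∑ e, lovaszExt (f e) x ^ p) / D := by
        rw [div_le_div_iff₀ hppow hDpos]
        calc h ^ p * D ≤ p ^ p * (∑ e, lovaszExt (f e) x ^ p) := hpow2
          _ = (∑ e, lovaszExt (f e) x ^ p) * p ^ p := by ring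
      calc h ^ p / p ^ p ≤ (∑ e, lovaszExt (f e) x ^ p) / D := hfin
        _ ≤ (∑ e, lovaszExt (f e) x ^ p) /
            (⨅ c : ℝ, ∑ i, (∑ e, g e {i}) * |x i - c| ^ p) :=
            div_le_div_of_nonneg_left hNum_nn hDen_pos hDen_le
    exact ⟨part1, part2⟩
end

section
/- Let f : ℝⁿ → ℝ be real-analytic on all of ℝⁿ, and let g : ℝⁿ → ℝ be continuously differentiable with g > 0 on the set K = {x ∈ ℝⁿ : x_i ≥ 0 for all i} ∖ {0}. Suppose x ∈ K is a maximizer of f/g over K. Let v ∈ ℝⁿ satisfy: x + v ∈ K; v_i = 0 whenever x_i = 0; the map t ↦ g(x + t·v) is constant on ℝ; and the second partial derivative ∂²f/∂y_i∂y_j vanishes identically on ℝⁿ for all indices i, j with v_i ≠ 0 and v_j ≠ 0. Then x + v is also a maximizer of f/g over K; in particular f(x+v)/g(x+v) = f(x)/g(x). The same conclusion holds with 'maximizer' replaced by 'minimizer'. -/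
/-- The nonnegative orthant of `ℝⁿ` with the origin removed. -/
def posOrth (n : ℕ) : Set (Fin n → ℝ) := {z | (∀ i, 0 ≤ z i) ∧ z ≠ 0}

/-- for real-analytic `f` and `C¹` positive `g` on
`K = ℝⁿ_{≥0} ∖ {0}`, a maximizer (resp. minimizer) `x` of `f/g` over `K` can be moved
to `x + v` along a direction `v` supported in `supp(x)` along which `g` is constant and
the second partials of `f` vanish; `x + v` is again a maximizer (resp. minimizer). -/
theorem stmt_12 {n : ℕ} (f g : (Fin n → ℝ) → ℝ)
    (hf : ∀ x, AnalyticAt ℝ f x) (hg : ContDiff ℝ 1 g)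
    (hgpos : ∀ z ∈ posOrth n, 0 < g z)
    (x v : Fin n → ℝ) (hx : x ∈ posOrth n) (hxv : x + v ∈ posOrth n)
    (hsupp : ∀ i, x i = 0 → v i = 0)
    (hgconst : ∀ t : ℝ, g (x + t • v) = g x)
    (hsec : ∀ i j, v i ≠ 0 → v j ≠ 0 → ∀ y : Fin n → ℝ,
      fderiv ℝ (fun z => fderiv ℝ f z (Pi.single j 1)) y (Pi.single i 1) = 0) :
    ((∀ z ∈ posOrth n, f z / g z ≤ f x / g x) →
      (∀ z ∈ posOrth n, f z / g z ≤ f (x + v) / g (x + v)) ∧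
        f (x + v) / g (x + v) = f x / g x) ∧
    ((∀ z ∈ posOrth n, f x / g x ≤ f z / g z) →
      (∀ z ∈ posOrth n, f (x + v) / g (x + v) ≤ f z / g z) ∧
        f (x + v) / g (x + v) = f x / g x) := by
  classical
  have hfC : ContDiff ℝ (⊤ : ℕ∞) f := contDiff_iff_contDiffAt.mpr fun y => (hf y).contDiffAt
  have hfd : ContDiff ℝ (⊤ : ℕ∞) (fderiv ℝ f) := hfC.fderiv_right (mod_cast le_top)
  have hvdecomp : v = ∑ j, v j • (Pi.single j 1 : Fin n → ℝ) := by
    funext i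
    simp [Finset.sum_apply, Pi.single_apply, mul_comm]
  -- key: second directional derivative of f in direction v vanishes
  have hsec' : ∀ y, fderiv ℝ (fun z => fderiv ℝ f z v) y v = 0 := by
    intro y
    have hFj : ∀ j : Fin n, Differentiable ℝ (fun z => fderiv ℝ f z (Pi.single j 1)) :=
      fun j => (hfd.clm_apply contDiff_const).differentiable (by simp)
    have hrw : (fun z => fderiv ℝ f z v)
        = fun z => ∑ j, v j • fderiv ℝ f z (Pi.single j 1) := by
      funext z
      conv_lhs => rw [hvdecomp]
      rw [map_sum]
      simp
    rw [hrw, fderiv_fun_sum (A := fun j z => v j • fderiv ℝ f z (Pi.single j 1))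
      (fun j _ => ((hFj j) y).const_smul (v j))]
    rw [ContinuousLinearMap.sum_apply]
    refine Finset.sum_eq_zero fun j _ => ?_
    rw [fderiv_fun_const_smul ((hFj j) y) (v j), ContinuousLinearMap.smul_apply]
    rcases eq_or_ne (v j) 0 with h | h
    · simp [h]
    · have hz : fderiv ℝ (fun z => fderiv ℝ f z (Pi.single j 1)) y v = 0 := by
        conv_lhs => rw [hvdecomp]
        rw [map_sum]
        refine Finset.sum_eq_zero fun i _ => ?_
        rcases eq_or_ne (v i) 0 with h' | h'
        · simp [h']
        · rw [map_smul, hsec i j h' h y]; simp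
      simp [hz]
  -- the line t ↦ x + t v
  have hγ : ∀ t : ℝ, HasDerivAt (fun s : ℝ => x + s • v) v t := by
    intro t
    simpa using (((hasDerivAt_id t).smul_const v).const_add x)
  set c : ℝ := fderiv ℝ f x v with hc_def
  have hψconst : ∀ t : ℝ, fderiv ℝ f (x + t • v) v = c := by
    have hdiff : Differentiable ℝ (fun z => fderiv ℝ f z v) :=
      (hfd.clm_apply contDiff_const).differentiable (by simp)
    have hψ : ∀ s : ℝ, HasDerivAt (fun s : ℝ => fderiv ℝ f (x + s • v) v) 0 s := by
      intro s
      have := (hdiff (x + s • v)).hasFDerivAt.comp_hasDerivAt s (hγ s)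
      simpa [Function.comp_def, hsec' (x + s • v)] using this
    intro t
    have := is_const_of_deriv_eq_zero (𝕜 := ℝ)
      (fun s => (hψ s).differentiableAt) (fun s => (hψ s).deriv) t 0
    simpa using this
  have hφ : ∀ t : ℝ, f (x + t • v) = f x + t * c := by
    intro t
    have hline : ∀ s : ℝ, HasDerivAt (fun s : ℝ => f (x + s • v) - s * c) 0 s := by
      intro s
      have h1 : HasDerivAt (fun s : ℝ => f (x + s • v)) c s := by
        have := (hfC.differentiable (by simp) (x + s • v)).hasFDerivAt.comp_hasDerivAt s (hγ s)
        simpa [Function.comp_def, hψconst s] using this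
      have h2 : HasDerivAt (fun s : ℝ => s * c) c s := by
        simpa using (hasDerivAt_id s).mul_const c
      simpa using h1.fun_sub h2
    have := is_const_of_deriv_eq_zero (𝕜 := ℝ)
      (fun s => (hline s).differentiableAt) (fun s => (hline s).deriv) t 0
    simp at this
    linarith [this]
  -- positivity of x on the support of v
  have hxpos : ∀ i, v i ≠ 0 → 0 < x i := fun i hvi =>
    lt_of_le_of_ne (hx.1 i) (fun h => hvi (hsupp i h.symm))
  -- a small ε such that x - ε v stays in the orthant
  obtain ⟨ε, hε0, hεlt⟩ : ∃ ε : ℝ, 0 < ε ∧ ∀ i, 0 < v i → ε * v i < x i := by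
    by_cases hT : (Finset.univ.filter (fun i => 0 < v i)).Nonempty
    · set T := Finset.univ.filter (fun i => 0 < v i) with hTdef
      refine ⟨(T.inf' hT fun i => x i / v i) / 2, ?_, ?_⟩
      · have hpos : 0 < T.inf' hT fun i => x i / v i := by
          rw [Finset.lt_inf'_iff]
          intro i hi
          have hvi : 0 < v i := (Finset.mem_filter.mp hi).2
          exact div_pos (hxpos i hvi.ne') hvi
        linarith
      · intro i hvi
        have hmem : i ∈ T := Finset.mem_filter.mpr ⟨Finset.mem_univ i, hvi⟩
        have h1 : (T.inf' hT fun i => x i / v i) ≤ x i / v i := Finset.inf'_le _ hmem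
        have h2 : 0 < x i / v i := div_pos (hxpos i hvi.ne') hvi
        have h3 : (T.inf' hT fun i => x i / v i) / 2 < x i / v i := by linarith
        calc (T.inf' hT fun i => x i / v i) / 2 * v i
            < (x i / v i) * v i := mul_lt_mul_of_pos_right h3 hvi
          _ = x i := div_mul_cancel₀ _ hvi.ne'
    · refine ⟨1, one_pos, fun i hvi => ?_⟩
      exact absurd ⟨i, Finset.mem_filter.mpr ⟨Finset.mem_univ i, hvi⟩⟩ hT
  -- membership of x - ε v
  have hK2pos : ∀ i, x i ≠ 0 → 0 < x i + (-ε) * v i := by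
    intro i hxi
    have hxi' : 0 < x i := lt_of_le_of_ne (hx.1 i) (Ne.symm hxi)
    rcases lt_trichotomy (v i) 0 with h | h | h
    · nlinarith
    · simp [h]; linarith
    · have := hεlt i h; linarith
  have hK2 : x + (-ε) • v ∈ posOrth n := by
    constructor
    · intro i
      simp only [Pi.add_apply, Pi.smul_apply, smul_eq_mul]
      rcases eq_or_ne (x i) 0 with h | h
      · simp [h, hsupp i h]
      · exact (hK2pos i h).le
    · obtain ⟨i, hi⟩ := Function.ne_iff.mp hx.2
      simp only [Pi.zero_apply] at hi
      intro h0
      have := congrFun h0 i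
      simp only [Pi.add_apply, Pi.smul_apply, smul_eq_mul, Pi.zero_apply] at this
      exact absurd this (hK2pos i hi).ne'
  have hgx : 0 < g x := hgpos x hx
  have hgv : g (x + v) = g x := by
    have := hgconst 1; rwa [one_smul] at this
  have hfv : f (x + v) = f x + c := by
    have := hφ 1; rwa [one_smul, one_mul] at this
  have hgε : g (x + (-ε) • v) = g x := hgconst (-ε)
  have hfε : f (x + (-ε) • v) = f x + (-ε) * c := hφ (-ε)
  constructor
  · intro hmax
    have h1 : c ≤ 0 := by
      have h := hmax (x + v) hxv
      rw [hfv, hgv, div_le_div_iff₀ hgx hgx] at h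
      nlinarith
    have h2 : 0 ≤ c := by
      have h := hmax (x + (-ε) • v) hK2
      rw [hfε, hgε, div_le_div_iff₀ hgx hgx] at h
      nlinarith [mul_pos hε0 hgx]
    have hc : c = 0 := le_antisymm h1 h2
    have heq : f (x + v) / g (x + v) = f x / g x := by
      rw [hfv, hgv, hc, add_zero]
    exact ⟨fun z hz => heq ▸ hmax z hz, heq⟩
  · intro hmin
    have h1 : 0 ≤ c := by
      have h := hmin (x + v) hxv
      rw [hfv, hgv, div_le_div_iff₀ hgx hgx] at h
      nlinarith
    have h2 : c ≤ 0 := by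
      have h := hmin (x + (-ε) • v) hK2
      rw [hfε, hgε, div_le_div_iff₀ hgx hgx] at h
      nlinarith [mul_pos hε0 hgx]
    have hc : c = 0 := le_antisymm h2 h1
    have heq : f (x + v) / g (x + v) = f x / g x := by
      rw [hfv, hgv, hc, add_zero]
    exact ⟨fun z hz => heq ▸ hmin z hz, heq⟩
end

section
/- Let W = (W_{ij}) be a symmetric n×n real matrix with nonnegative entries and zero diagonal (a weighted graph on V = {1,…,n}). For a symmetric real matrix W' with |W'_{ij}| = W_{ij} for all i, j (a signing of W), let λ_k(W') denote its k-th smallest eigenvalue, characterized by λ_k(W') = min over k-dimensional linear subspaces X of ℝⁿ of max_{x ∈ X ∖ {0}} ⟨W' x, x⟩ / ⟨x, x⟩. Then for every such W' and every 1 ≤ k ≤ n: min over U ⊆ V with #U = k of max_{i∈U} ∑_{j∈U} W_{ij} ≥ max{ λ_k(W'), −λ_{n−k+1}(W') }. -/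
open Matrix

/-- The `k`-th smallest eigenvalue of a symmetric matrix via the Courant–Fischer
characterization: the infimum over `k`-dimensional subspaces `X` of the supremum of
the Rayleigh quotient over `X ∖ {0}`. -/
noncomputable def minmaxEig {n : ℕ} (W : Matrix (Fin n) (Fin n) ℝ) (k : ℕ) : ℝ :=
  sInf {r | ∃ X : Submodule ℝ (Fin n → ℝ), Module.finrank ℝ X = k ∧
    r = sSup {s | ∃ x ∈ X, x ≠ 0 ∧ s = (W.mulVec x ⬝ᵥ x) / (x ⬝ᵥ x)}}

section Aux

variable {n : ℕ}

private lemma stmt13_finrank_span (U : Finset (Fin n)) :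
    Module.finrank ℝ (Submodule.span ℝ
      ((fun i => Pi.single i (1:ℝ)) '' (U : Set (Fin n)))) = U.card := by
  have hli : LinearIndependent ℝ
      (fun i : (U : Set (Fin n)) => (Pi.single (i : Fin n) (1:ℝ) : Fin n → ℝ)) := by
    have h2 := (Pi.basisFun ℝ (Fin n)).linearIndependent.comp
      (fun i : (U : Set (Fin n)) => (i : Fin n)) Subtype.val_injective
    simpa [Function.comp_def, Pi.basisFun_apply] using h2
  have h := finrank_span_eq_card hli
  have hr : Set.range (fun i : (U : Set (Fin n)) => (Pi.single (i : Fin n) (1:ℝ) : Fin n → ℝ))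
      = (fun i => Pi.single i (1:ℝ)) '' (U : Set (Fin n)) := by
    ext v
    simp
  rw [hr] at h
  rw [h]
  simp

private lemma stmt13_span_supp (U : Finset (Fin n)) {x : Fin n → ℝ}
    (hx : x ∈ Submodule.span ℝ ((fun i => Pi.single i (1:ℝ)) '' (U : Set (Fin n)))) :
    ∀ j ∉ U, x j = 0 := by
  let P : Submodule ℝ (Fin n → ℝ) :=
    { carrier := {y | ∀ j ∉ U, y j = 0}
      add_mem' := fun ha hb j hj => by simp [ha j hj, hb j hj]
      zero_mem' := fun j hj => rfl
      smul_mem' := fun c y hy j hj => by simp [hy j hj] }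
  have hle : Submodule.span ℝ ((fun i => Pi.single i (1:ℝ)) '' (U : Set (Fin n))) ≤ P := by
    rw [Submodule.span_le]
    rintro - ⟨i, hi, rfl⟩ j hj
    exact Pi.single_eq_of_ne (by intro h; subst h; exact hj hi) 1
  exact hle hx

private lemma stmt13_quad_bound (W W' : Matrix (Fin n) (Fin n) ℝ) (hWsym : W.IsSymm)
    (hWnn : ∀ i j, 0 ≤ W i j) (habs : ∀ i j, |W' i j| = W i j)
    (U : Finset (Fin n)) (x : Fin n → ℝ) (hx : ∀ j ∉ U, x j = 0) :
    |W'.mulVec x ⬝ᵥ x| ≤ ∑ i ∈ U, (∑ j ∈ U, W i j) * x i ^ 2 := by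
  have hmv : ∀ i, W'.mulVec x i = ∑ j ∈ U, W' i j * x j := by
    intro i
    show (fun j => W' i j) ⬝ᵥ x = _
    rw [dotProduct]
    exact (Finset.sum_subset U.subset_univ (fun j _ hj => by simp [hx j hj])).symm
  have hquad : W'.mulVec x ⬝ᵥ x = ∑ i ∈ U, ∑ j ∈ U, W' i j * x j * x i := by
    rw [dotProduct]
    rw [← Finset.sum_subset U.subset_univ (fun i _ hi => by simp [hx i hi])]
    refine Finset.sum_congr rfl fun i _ => ?_
    rw [hmv i, Finset.sum_mul]
  rw [hquad]
  calc |∑ i ∈ U, ∑ j ∈ U, W' i j * x j * x i|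
      ≤ ∑ i ∈ U, |∑ j ∈ U, W' i j * x j * x i| := Finset.abs_sum_le_sum_abs _ _
    _ ≤ ∑ i ∈ U, ∑ j ∈ U, |W' i j * x j * x i| :=
        Finset.sum_le_sum fun i _ => Finset.abs_sum_le_sum_abs _ _
    _ ≤ ∑ i ∈ U, ∑ j ∈ U, W i j * ((x i ^ 2 + x j ^ 2) / 2) := by
        refine Finset.sum_le_sum fun i _ => Finset.sum_le_sum fun j _ => ?_
        rw [abs_mul, abs_mul, habs i j]
        have h1 : |x j| * |x i| ≤ (x i ^ 2 + x j ^ 2) / 2 := by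
          nlinarith [sq_abs (x i), sq_abs (x j), sq_nonneg (|x i| - |x j|)]
        calc W i j * |x j| * |x i| = W i j * (|x j| * |x i|) := by ring
          _ ≤ W i j * ((x i ^ 2 + x j ^ 2) / 2) :=
              mul_le_mul_of_nonneg_left h1 (hWnn i j)
    _ = ∑ i ∈ U, (∑ j ∈ U, W i j) * x i ^ 2 := by
        have h2 : ∑ i ∈ U, ∑ j ∈ U, W i j * x j ^ 2
            = ∑ i ∈ U, ∑ j ∈ U, W i j * x i ^ 2 := by
          rw [Finset.sum_comm]
          refine Finset.sum_congr rfl fun i _ => Finset.sum_congr rfl fun j _ => ?_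
          rw [hWsym.apply]
        have expand : ∀ i ∈ U, ∀ j ∈ U, W i j * ((x i ^ 2 + x j ^ 2) / 2)
            = W i j * x i ^ 2 / 2 + W i j * x j ^ 2 / 2 := fun i _ j _ => by ring
        calc ∑ i ∈ U, ∑ j ∈ U, W i j * ((x i ^ 2 + x j ^ 2) / 2)
            = ∑ i ∈ U, ∑ j ∈ U, (W i j * x i ^ 2 / 2 + W i j * x j ^ 2 / 2) := by
              refine Finset.sum_congr rfl fun i hi => Finset.sum_congr rfl fun j hj => ?_
              exact expand i hi j hj
          _ = (∑ i ∈ U, ∑ j ∈ U, W i j * x i ^ 2) / 2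
              + (∑ i ∈ U, ∑ j ∈ U, W i j * x j ^ 2) / 2 := by
              simp [Finset.sum_add_distrib, Finset.sum_div]
          _ = ∑ i ∈ U, ∑ j ∈ U, W i j * x i ^ 2 := by rw [h2]; ring
          _ = ∑ i ∈ U, (∑ j ∈ U, W i j) * x i ^ 2 := by
              refine Finset.sum_congr rfl fun i _ => ?_
              rw [Finset.sum_mul]

private lemma stmt13_dot_self (U : Finset (Fin n)) (x : Fin n → ℝ) (hx : ∀ j ∉ U, x j = 0) :
    x ⬝ᵥ x = ∑ i ∈ U, x i ^ 2 := by
  rw [dotProduct]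
  rw [← Finset.sum_subset U.subset_univ (fun i _ hi => by simp [hx i hi])]
  exact Finset.sum_congr rfl fun i _ => (sq (x i)).symm

private lemma stmt13_dot_pos {x : Fin n → ℝ} (hx : x ≠ 0) : 0 < x ⬝ᵥ x := by
  have h1 : 0 ≤ x ⬝ᵥ x := Finset.sum_nonneg fun i _ => mul_self_nonneg (x i)
  rcases h1.eq_or_lt with h | h
  · exact absurd (dotProduct_self_eq_zero.mp h.symm) hx
  · exact h

private lemma stmt13_rayleigh_le (W W' : Matrix (Fin n) (Fin n) ℝ) (hWsym : W.IsSymm)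
    (hWnn : ∀ i j, 0 ≤ W i j) (habs : ∀ i j, |W' i j| = W i j)
    (U : Finset (Fin n)) (x : Fin n → ℝ) (hx : ∀ j ∉ U, x j = 0) (hxne : x ≠ 0) :
    |(W'.mulVec x ⬝ᵥ x) / (x ⬝ᵥ x)|
      ≤ sSup ((fun i => ∑ j ∈ U, W i j) '' (U : Set (Fin n))) := by
  set D := sSup ((fun i => ∑ j ∈ U, W i j) '' (U : Set (Fin n))) with hD
  have hpos := stmt13_dot_pos hxne
  have hbdd : BddAbove ((fun i => ∑ j ∈ U, W i j) '' (U : Set (Fin n))) :=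
    (U.finite_toSet.image _).bddAbove
  have hdeg : ∀ i ∈ U, (∑ j ∈ U, W i j) ≤ D := fun i hi => le_csSup hbdd ⟨i, hi, rfl⟩
  have hnum : |W'.mulVec x ⬝ᵥ x| ≤ D * (x ⬝ᵥ x) := by
    calc |W'.mulVec x ⬝ᵥ x| ≤ ∑ i ∈ U, (∑ j ∈ U, W i j) * x i ^ 2 :=
          stmt13_quad_bound W W' hWsym hWnn habs U x hx
      _ ≤ ∑ i ∈ U, D * x i ^ 2 :=
          Finset.sum_le_sum fun i hi =>
            mul_le_mul_of_nonneg_right (hdeg i hi) (sq_nonneg _)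
      _ = D * (x ⬝ᵥ x) := by rw [stmt13_dot_self U x hx, Finset.mul_sum]
  rw [abs_div, abs_of_pos hpos, div_le_iff₀ hpos]
  exact hnum

private lemma stmt13_rayleigh_global (W W' : Matrix (Fin n) (Fin n) ℝ) (hWsym : W.IsSymm)
    (hWnn : ∀ i j, 0 ≤ W i j) (habs : ∀ i j, |W' i j| = W i j)
    (x : Fin n → ℝ) (hxne : x ≠ 0) :
    |(W'.mulVec x ⬝ᵥ x) / (x ⬝ᵥ x)| ≤ ∑ i, ∑ j, W i j := by
  set M : ℝ := ∑ i, ∑ j, W i j with hM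
  have hpos := stmt13_dot_pos hxne
  have hdeg : ∀ i : Fin n, (∑ j, W i j) ≤ M := fun i =>
    Finset.single_le_sum (f := fun i => ∑ j, W i j)
      (fun i _ => Finset.sum_nonneg fun j _ => hWnn i j) (Finset.mem_univ i)
  have hnum : |W'.mulVec x ⬝ᵥ x| ≤ M * (x ⬝ᵥ x) := by
    calc |W'.mulVec x ⬝ᵥ x| ≤ ∑ i, (∑ j, W i j) * x i ^ 2 :=
          stmt13_quad_bound W W' hWsym hWnn habs Finset.univ x (fun j hj => by simp at hj)
      _ ≤ ∑ i, M * x i ^ 2 :=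
          Finset.sum_le_sum fun i _ =>
            mul_le_mul_of_nonneg_right (hdeg i) (sq_nonneg _)
      _ = M * (x ⬝ᵥ x) := by
          rw [stmt13_dot_self Finset.univ x (fun j hj => by simp at hj), Finset.mul_sum]
  rw [abs_div, abs_of_pos hpos, div_le_iff₀ hpos]
  exact hnum

end Aux

/-- for a weighted graph `W` and any signing `W'` of it,
`min_{#U = k} max_{i ∈ U} ∑_{j ∈ U} W_{ij} ≥ max{λ_k(W'), −λ_{n−k+1}(W')}`. -/
theorem stmt_13 {n : ℕ} (W W' : Matrix (Fin n) (Fin n) ℝ)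
    (hWsym : W.IsSymm) (hWnn : ∀ i j, 0 ≤ W i j) (hWdiag : ∀ i, W i i = 0)
    (hW'sym : W'.IsSymm) (habs : ∀ i j, |W' i j| = W i j)
    (k : ℕ) (hk1 : 1 ≤ k) (hkn : k ≤ n) :
    max (minmaxEig W' k) (-(minmaxEig W' (n - k + 1))) ≤
      sInf {d | ∃ U : Finset (Fin n), U.card = k ∧
        d = sSup ((fun i => ∑ j ∈ U, W i j) '' (U : Set (Fin n)))} := by
  set M : ℝ := ∑ i, ∑ j, W i j with hM
  have hRset : ∀ X : Submodule ℝ (Fin n → ℝ),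
      ∀ s ∈ {s | ∃ x ∈ X, x ≠ 0 ∧ s = (W'.mulVec x ⬝ᵥ x) / (x ⬝ᵥ x)}, s ≤ M := by
    rintro X s ⟨x, hxX, hxne, rfl⟩
    exact le_trans (le_abs_self _) (stmt13_rayleigh_global W W' hWsym hWnn habs x hxne)
  have hlb : ∀ m : ℕ, 1 ≤ m → ∀ r ∈ {r | ∃ X : Submodule ℝ (Fin n → ℝ),
      Module.finrank ℝ X = m ∧
      r = sSup {s | ∃ x ∈ X, x ≠ 0 ∧ s = (W'.mulVec x ⬝ᵥ x) / (x ⬝ᵥ x)}}, -M ≤ r := by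
    rintro m hm r ⟨X, hfr, rfl⟩
    have hXne : X ≠ ⊥ := by
      intro h; rw [h, finrank_bot] at hfr; omega
    obtain ⟨x, hxX, hxne⟩ := Submodule.exists_mem_ne_zero_of_ne_bot hXne
    have h1 : -M ≤ (W'.mulVec x ⬝ᵥ x) / (x ⬝ᵥ x) :=
      (abs_le.mp (stmt13_rayleigh_global W W' hWsym hWnn habs x hxne)).1
    exact le_trans h1 (le_csSup ⟨M, fun s hs => hRset X s hs⟩ ⟨x, hxX, hxne, rfl⟩)
  refine le_csInf ?_ ?_
  · obtain ⟨U, -, hUcard⟩ := Finset.exists_subset_card_eq (s := (Finset.univ : Finset (Fin n))) (n := k) (by simpa using hkn)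
    exact ⟨_, U, hUcard, rfl⟩
  · rintro d ⟨U, hUcard, rfl⟩
    set D := sSup ((fun i => ∑ j ∈ U, W i j) '' (U : Set (Fin n))) with hD
    set P := Submodule.span ℝ ((fun i => Pi.single i (1:ℝ)) '' (U : Set (Fin n))) with hP
    have hPfr : Module.finrank ℝ P = k := by rw [hP, stmt13_finrank_span, hUcard]
    have hray : ∀ x ∈ P, x ≠ 0 → |(W'.mulVec x ⬝ᵥ x) / (x ⬝ᵥ x)| ≤ D := fun x hxP hxne =>
      stmt13_rayleigh_le W W' hWsym hWnn habs U x (stmt13_span_supp U hxP) hxne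
    refine max_le ?_ ?_
    · refine le_trans (csInf_le ⟨-M, fun r hr => hlb k hk1 r hr⟩
        (⟨P, hPfr, rfl⟩ : _ ∈ {r | ∃ X : Submodule ℝ (Fin n → ℝ),
          Module.finrank ℝ X = k ∧
          r = sSup {s | ∃ x ∈ X, x ≠ 0 ∧ s = (W'.mulVec x ⬝ᵥ x) / (x ⬝ᵥ x)}})) ?_
      refine csSup_le ?_ ?_
      · have hPne : P ≠ ⊥ := by intro h; rw [h, finrank_bot] at hPfr; omega
        obtain ⟨x, hxP, hxne⟩ := Submodule.exists_mem_ne_zero_of_ne_bot hPne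
        exact ⟨_, x, hxP, hxne, rfl⟩
      · rintro s ⟨x, hxP, hxne, rfl⟩
        exact le_trans (le_abs_self _) (hray x hxP hxne)
    · refine neg_le.mpr ?_
      refine le_csInf ?_ ?_
      · obtain ⟨T, -, hT⟩ := Finset.exists_subset_card_eq (s := (Finset.univ : Finset (Fin n))) (n := n - k + 1)
          (by simp only [Finset.card_univ, Fintype.card_fin]; omega)
        exact ⟨_, Submodule.span ℝ ((fun i => Pi.single i (1:ℝ)) '' (T : Set (Fin n))),
          by rw [stmt13_finrank_span, hT], rfl⟩
      · rintro r ⟨X, hXfr, rfl⟩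
        have hsum := Submodule.finrank_sup_add_finrank_inf_eq X P
        have hsup : Module.finrank ℝ ↥(X ⊔ P) ≤ n := by
          refine le_trans (Submodule.finrank_le _) ?_
          simp [Module.finrank_pi]
        have hinf : 1 ≤ Module.finrank ℝ ↥(X ⊓ P) := by omega
        have hne : X ⊓ P ≠ ⊥ := by intro h; rw [h, finrank_bot] at hinf; omega
        obtain ⟨x, hx, hxne⟩ := Submodule.exists_mem_ne_zero_of_ne_bot hne
        have hxX : x ∈ X := (Submodule.mem_inf.mp hx).1
        have hxP : x ∈ P := (Submodule.mem_inf.mp hx).2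
        have h1 : -D ≤ (W'.mulVec x ⬝ᵥ x) / (x ⬝ᵥ x) := (abs_le.mp (hray x hxP hxne)).1
        exact le_trans h1 (le_csSup ⟨M, fun s hs => hRset X s hs⟩ ⟨x, hxX, hxne, rfl⟩)
end

section
/- Let W be a symmetric n×n real matrix with nonnegative entries and zero diagonal, and suppose there exists a symmetric real matrix W' with |W'_{ij}| = W_{ij} for all i, j and W'² = λ·Iₙ for some λ > 0. Then n is even, and for every subset U ⊆ {1,…,n} with #U = n/2 + 1 one has max_{i∈U} ∑_{j∈U} W_{ij} ≥ √λ. -/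
open Matrix LinearMap Module Submodule


/-- if a weighted graph `W` admits a signing `W'` with `W'² = λ·I`,
`λ > 0`, then `n` is even and every set `U` of `n/2 + 1` vertices contains a vertex of
induced degree at least `√λ`. -/
theorem stmt_14 {n : ℕ} (W W' : Matrix (Fin n) (Fin n) ℝ)
    (hWsym : W.IsSymm) (hWnn : ∀ i j, 0 ≤ W i j) (hWdiag : ∀ i, W i i = 0)
    (hW'sym : W'.IsSymm) (habs : ∀ i j, |W' i j| = W i j)
    (lam : ℝ) (hlam : 0 < lam) (hsq : W' * W' = lam • (1 : Matrix (Fin n) (Fin n) ℝ)) :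
    Even n ∧ ∀ U : Finset (Fin n), U.card = n / 2 + 1 →
      ∃ i ∈ U, Real.sqrt lam ≤ ∑ j ∈ U, W i j := by
  set s : ℝ := Real.sqrt lam with hs
  have hspos : 0 < s := Real.sqrt_pos.mpr hlam
  have hs2 : s * s = lam := Real.mul_self_sqrt hlam.le
  set P : Matrix (Fin n) (Fin n) ℝ := (2 * s)⁻¹ • (W' + s • 1) with hPdef
  have hkey : (W' + s • 1) * (W' + s • 1) = (2 * s) • (W' + s • 1) := by
    rw [add_mul, mul_add, mul_add, hsq, ← hs2]
    simp only [smul_mul_assoc, mul_smul_comm, Matrix.one_mul, Matrix.mul_one, smul_smul]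
    module
  have hinv : (2 * s)⁻¹ * (2 * s) = 1 := inv_mul_cancel₀ (by positivity)
  have hPP : P * P = P := by
    rw [hPdef, smul_mul_assoc, mul_smul_comm, hkey, smul_smul, smul_smul,
      mul_assoc, hinv, mul_one]
  have hWP : W' * P = s • P := by
    rw [hPdef, mul_smul_comm, mul_add, hsq, mul_smul_comm, Matrix.mul_one, ← hs2, smul_smul]
    module
  set f : (Fin n → ℝ) →ₗ[ℝ] (Fin n → ℝ) := Matrix.toLin' P with hf
  have hff : f ∘ₗ f = f := by
    rw [hf, ← Matrix.toLin'_mul, hPP]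
  obtain ⟨p, hp⟩ := (LinearMap.isProj_iff_isIdempotentElem f).mpr hff
  have htr : LinearMap.trace ℝ (Fin n → ℝ) f = (finrank ℝ p : ℝ) := hp.trace
  have htrP : LinearMap.trace ℝ (Fin n → ℝ) f = Matrix.trace P := by
    rw [LinearMap.trace_eq_matrix_trace ℝ (Pi.basisFun ℝ (Fin n)),
      LinearMap.toMatrix_eq_toMatrix', hf, LinearMap.toMatrix'_toLin']
  have hW'diag : ∀ i, W' i i = 0 := fun i => by
    have := habs i i; rw [hWdiag i] at this; exact abs_eq_zero.mp this
  have htrval : Matrix.trace P = (2 * s)⁻¹ * (s * n) := by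
    rw [hPdef, Matrix.trace_smul, Matrix.trace_add, Matrix.trace_smul, Matrix.trace_one]
    simp only [Matrix.trace, Matrix.diag, hW'diag, Finset.sum_const_zero]
    simp [Finset.card_univ]
  have hrn : 2 * finrank ℝ p = n := by
    have h1 : (finrank ℝ p : ℝ) = (2 : ℝ)⁻¹ * n := by
      rw [← htr, htrP, htrval]
      field_simp
    have h2 : (2 * finrank ℝ p : ℝ) = (n : ℝ) := by
      push_cast
      rw [h1]; field_simp
    exact_mod_cast h2
  refine ⟨⟨finrank ℝ p, by omega⟩, ?_⟩
  intro U hU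
  have hUcard : U.card = finrank ℝ p + 1 := by omega
  set K : Submodule ℝ (Fin n → ℝ) :=
    Submodule.span ℝ (Set.range (fun i : U => (Pi.single (i : Fin n) (1 : ℝ) : Fin n → ℝ))) with hK
  have hli : LinearIndependent ℝ (fun i : U => (Pi.single (i : Fin n) (1 : ℝ) : Fin n → ℝ)) := by
    have h2 := (Pi.basisFun ℝ (Fin n)).linearIndependent.comp
      (Subtype.val : U → Fin n) Subtype.val_injective
    have heq : (fun i : U => (Pi.single (i : Fin n) (1 : ℝ) : Fin n → ℝ)) =
        (⇑(Pi.basisFun ℝ (Fin n)) ∘ Subtype.val) := by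
      funext i
      simp [Pi.basisFun_apply]
    rw [heq]
    exact h2
  have hKrank : finrank ℝ K = U.card := by
    rw [hK, finrank_span_eq_card hli, Fintype.card_coe]
  have hKmem : ∀ v ∈ K, ∀ j ∉ U, v j = 0 := by
    intro v hv j hj
    have hle : K ≤ LinearMap.ker (LinearMap.proj (R := ℝ) (φ := fun _ : Fin n => ℝ) j) := by
      rw [hK, Submodule.span_le]
      rintro _ ⟨i, rfl⟩
      simp only [SetLike.mem_coe, LinearMap.mem_ker, LinearMap.proj_apply]
      exact Pi.single_eq_of_ne (fun h => hj (by rw [h]; exact i.2)) 1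
    exact hle hv
  have heig : ∀ v ∈ p, W'.mulVec v = s • v := by
    intro v hv
    have hv' : f v = v := hp.map_id v hv
    have hvP : P.mulVec v = v := by
      rw [← Matrix.toLin'_apply]
      exact hv'
    rw [← hvP, Matrix.mulVec_mulVec, hWP, Matrix.smul_mulVec]
  have hdim : 0 < finrank ℝ ↥(p ⊓ K) := by
    have hsum := Submodule.finrank_sup_add_finrank_inf_eq p K
    have hle : finrank ℝ ↥(p ⊔ K) ≤ n := by
      have := Submodule.finrank_le (p ⊔ K)
      rwa [Module.finrank_fin_fun] at this
    omega
  have hnt : Nontrivial ↥(p ⊓ K) := Module.finrank_pos_iff.mp hdim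
  obtain ⟨⟨v, hvmem⟩, hvne⟩ := exists_ne (0 : ↥(p ⊓ K))
  have hv0 : v ≠ 0 := fun h => hvne (Subtype.ext h)
  obtain ⟨hvp, hvK⟩ := Submodule.mem_inf.mp hvmem
  have hvsupp : ∀ j ∉ U, v j = 0 := hKmem v hvK
  have hveig : W'.mulVec v = s • v := heig v hvp
  have hUne : U.Nonempty := Finset.card_pos.mp (by omega)
  obtain ⟨i, hiU, hmax⟩ := U.exists_max_image (fun j => |v j|) hUne
  have hvipos : 0 < |v i| := by
    rcases lt_or_eq_of_le (abs_nonneg (v i)) with h | h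
    · exact h
    · exfalso
      apply hv0
      funext j
      by_cases hj : j ∈ U
      · have := hmax j hj
        rw [← h] at this
        exact abs_eq_zero.mp (le_antisymm this (abs_nonneg _))
      · exact hvsupp j hj
  refine ⟨i, hiU, ?_⟩
  have hcomp : s * v i = ∑ j ∈ U, W' i j * v j := by
    have h1 : (W'.mulVec v) i = s * v i := by rw [hveig]; simp
    have h2 : (W'.mulVec v) i = ∑ j, W' i j * v j := by
      simp [Matrix.mulVec, dotProduct]
    rw [← h1, h2]
    exact (Finset.sum_subset U.subset_univ
      (fun j _ hj => by rw [hvsupp j hj, mul_zero])).symm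
  have hineq : s * |v i| ≤ (∑ j ∈ U, W i j) * |v i| := by
    calc s * |v i| = |s * v i| := by rw [abs_mul, abs_of_pos hspos]
    _ = |∑ j ∈ U, W' i j * v j| := by rw [hcomp]
    _ ≤ ∑ j ∈ U, |W' i j * v j| := Finset.abs_sum_le_sum_abs _ _
    _ = ∑ j ∈ U, W i j * |v j| := by
        refine Finset.sum_congr rfl fun j _ => ?_
        rw [abs_mul, habs]
    _ ≤ ∑ j ∈ U, W i j * |v i| := by
        refine Finset.sum_le_sum fun j hj => ?_
        exact mul_le_mul_of_nonneg_left (hmax j hj) (hWnn i j)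
    _ = (∑ j ∈ U, W i j) * |v i| := by rw [Finset.sum_mul]
  exact le_of_mul_le_mul_right hineq hvipos
end
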